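/- arXiv:2207.01655 — 5 statements merged into one kernel-verified Lean document; each statement's English description precedes it below -/
import Mathlib

section
/- Let σ > 0, let a, b > 0 and let c ∈ ℝ with |c| < a + b. Then (a+b+c)^{−σ} + (a+b−c)^{−σ} − 2 a^{−σ} ≥ 2σ a^{−σ−1} · ( −b + ((σ+1)/2) · (1 − (σ+2)·(b/a)) · (c²/a) ). -/
/-!
With `S = a + b` and `p = -σ`, the even function `g t = (S + t) ^ p + (S - t) ^ p` has
`g'' t = p (p - 1) ((S + t) ^ (p - 2) + (S - t) ^ (p - 2)) ≥ 2 p (p - 1) S ^ (p - 2)` by convexity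
of `x ↦ x ^ (p - 2)`, so `g c ≥ 2 S ^ p + p (p - 1) S ^ (p - 2) c ^ 2`. Bounding `S ^ p` and
`S ^ (p - 2)` from below by their tangent lines at `a` gives the inequality.
-/

open Real Set

lemma ConvexOn.add_mul_sub_le_of_hasDerivAt {S : Set ℝ} {f : ℝ → ℝ} {f' x y : ℝ}
    (hf : ConvexOn ℝ S f) (hx : x ∈ S) (hy : y ∈ S) (hf' : HasDerivAt f f' x) :
    f x + f' * (y - x) ≤ f y := by
  rcases lt_trichotomy x y with hxy | rfl | hyx
  · have h := hf.le_slope_of_hasDerivAt hx hy hxy hf'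
    rw [slope_def_field, le_div_iff₀ (sub_pos.2 hxy)] at h
    linarith
  · simp
  · have h := hf.slope_le_of_hasDerivAt hy hx hyx hf'
    rw [slope_def_field, div_le_iff₀ (sub_pos.2 hyx)] at h
    linarith

lemma convexOn_rpow_of_nonpos {p : ℝ} (hp : p ≤ 0) : ConvexOn ℝ (Ioi 0) fun x : ℝ ↦ x ^ p := by
  refine convexOn_of_hasDerivWithinAt2_nonneg (convex_Ioi 0)
    (f' := fun x ↦ p * x ^ (p - 1)) (f'' := fun x ↦ p * (p - 1) * x ^ (p - 2))
    (fun x hx ↦ (continuousAt_rpow_const x p (Or.inl (ne_of_gt hx))).continuousWithinAt)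
    ?_ ?_ ?_ <;> rw [interior_Ioi] <;> intro x hx
  · exact (hasDerivAt_rpow_const (Or.inl (ne_of_gt hx))).hasDerivWithinAt
  · have h := ((hasDerivAt_rpow_const (p := p - 1) (Or.inl (ne_of_gt hx))).const_mul p
      ).hasDerivWithinAt (s := Ioi 0)
    rwa [sub_sub, one_add_one_eq_two, ← mul_assoc] at h
  · exact mul_nonneg (mul_nonneg_of_nonpos_of_nonpos hp (by linarith)) (rpow_nonneg hx.le _)

lemma rpow_tangent_le_rpow {p a x : ℝ} (hp : p ≤ 0) (ha : 0 < a) (hx : 0 < x) :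
    a ^ p + p * a ^ (p - 1) * (x - a) ≤ x ^ p :=
  (convexOn_rpow_of_nonpos hp).add_mul_sub_le_of_hasDerivAt ha hx
    (hasDerivAt_rpow_const (Or.inl ha.ne'))

lemma two_mul_add_two_mul_mul_sq_le_of_convexOn {D : Set ℝ} {g : ℝ → ℝ} {B c : ℝ}
    (hg : ConvexOn ℝ D fun t ↦ g t - B * t ^ 2) (hc : c ∈ D) (hc' : -c ∈ D) :
    2 * g 0 + 2 * B * c ^ 2 ≤ g c + g (-c) := by
  have h := hg.2 hc hc' (by norm_num : (0 : ℝ) ≤ 1 / 2) (by norm_num : (0 : ℝ) ≤ 1 / 2)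
    (by norm_num)
  simp only [smul_eq_mul, neg_sq] at h
  rw [show 1 / 2 * c + 1 / 2 * -c = (0 : ℝ) by ring] at h
  linarith

lemma convexOn_rpow_add_add_rpow_sub_sub_mul_sq {p S : ℝ} (hp : p ≤ 0) (hS : 0 < S) :
    ConvexOn ℝ (Ioo (-S) S)
      fun t ↦ (S + t) ^ p + (S - t) ^ p - p * (p - 1) * S ^ (p - 2) * t ^ 2 := by
  set B := p * (p - 1) * S ^ (p - 2)
  have hf' : ∀ t ∈ Ioo (-S) S, HasDerivAt
      (fun t ↦ (S + t) ^ p + (S - t) ^ p - B * t ^ 2)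
      (p * (S + t) ^ (p - 1) - p * (S - t) ^ (p - 1) - B * (2 * t)) t := by
    rintro t ⟨ht₁, ht₂⟩
    have h := ((((hasDerivAt_id' t).const_add S).rpow_const (p := p) (Or.inl (by linarith))).add
      (((hasDerivAt_id' t).const_sub S).rpow_const (p := p) (Or.inl (by linarith)))).sub
      ((hasDerivAt_pow 2 t).const_mul B)
    refine h.congr_deriv ?_
    ring
  have hf'' : ∀ t ∈ Ioo (-S) S, HasDerivAt
      (fun t ↦ p * (S + t) ^ (p - 1) - p * (S - t) ^ (p - 1) - B * (2 * t))
      (p * (p - 1) * ((S + t) ^ (p - 2) + (S - t) ^ (p - 2)) - 2 * B) t := by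
    rintro t ⟨ht₁, ht₂⟩
    have h := (((((hasDerivAt_id' t).const_add S).rpow_const (p := p - 1)
      (Or.inl (by linarith))).const_mul p).sub
      ((((hasDerivAt_id' t).const_sub S).rpow_const (p := p - 1)
      (Or.inl (by linarith))).const_mul p)).sub (((hasDerivAt_id' t).const_mul 2).const_mul B)
    refine h.congr_deriv ?_
    rw [show p - 1 - 1 = p - 2 by ring]
    ring
  have hmid : ∀ t ∈ Ioo (-S) S, 2 * S ^ (p - 2) ≤ (S + t) ^ (p - 2) + (S - t) ^ (p - 2) := by
    rintro t ⟨ht₁, ht₂⟩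
    have h₁ := rpow_tangent_le_rpow (p := p - 2) (x := S + t) (by linarith) hS (by linarith)
    have h₂ := rpow_tangent_le_rpow (p := p - 2) (x := S - t) (by linarith) hS (by linarith)
    linarith
  refine convexOn_of_hasDerivWithinAt2_nonneg (convex_Ioo _ _)
    (f' := fun t ↦ p * (S + t) ^ (p - 1) - p * (S - t) ^ (p - 1) - B * (2 * t))
    (f'' := fun t ↦ p * (p - 1) * ((S + t) ^ (p - 2) + (S - t) ^ (p - 2)) - 2 * B)
    (fun t ht ↦ (hf' t ht).continuousAt.continuousWithinAt) ?_ ?_ ?_ <;>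
    rw [interior_Ioo] <;> intro t ht
  · exact (hf' t ht).hasDerivWithinAt
  · exact (hf'' t ht).hasDerivWithinAt
  · have hpp : 0 ≤ p * (p - 1) := mul_nonneg_of_nonpos_of_nonpos hp (by linarith)
    have := mul_le_mul_of_nonneg_left (hmid t ht) hpp
    linarith

lemma two_mul_rpow_add_le_rpow_add_add_rpow_sub {p S c : ℝ} (hp : p ≤ 0) (hc : |c| < S) :
    2 * S ^ p + p * (p - 1) * S ^ (p - 2) * c ^ 2 ≤ (S + c) ^ p + (S - c) ^ p := by
  obtain ⟨hc₁, hc₂⟩ := abs_lt.mp hc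
  have h := two_mul_add_two_mul_mul_sq_le_of_convexOn (g := fun t ↦ (S + t) ^ p + (S - t) ^ p)
    (convexOn_rpow_add_add_rpow_sub_sub_mul_sq hp (by linarith)) ⟨hc₁, hc₂⟩
    ⟨by linarith, by linarith⟩
  simp only [add_zero, sub_zero, ← sub_eq_add_neg, sub_neg_eq_add] at h
  linarith

theorem abc_inequality_general (σ a b c : ℝ) (hσ : 0 < σ) (ha : 0 < a)
    (hc : |c| < a + b) :
    (a + b + c) ^ (-σ) + (a + b - c) ^ (-σ) - 2 * a ^ (-σ)
      ≥ 2 * σ * a ^ (-σ - 1) *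
        (-b + (σ + 1) / 2 * (1 - (σ + 2) * (b / a)) * (c ^ 2 / a)) := by
  have hS : 0 < a + b := (abs_nonneg c).trans_lt hc
  have hsym := two_mul_rpow_add_le_rpow_add_add_rpow_sub (p := -σ) (by linarith) hc
  have htan := rpow_tangent_le_rpow (p := -σ) (by linarith) ha hS
  have htan₂ := mul_le_mul_of_nonneg_left
    (rpow_tangent_le_rpow (p := -σ - 2) (by linarith) ha hS)
    (by positivity : 0 ≤ σ * (σ + 1) * c ^ 2)
  have hrhs : 2 * σ * a ^ (-σ - 1) *
        (-b + (σ + 1) / 2 * (1 - (σ + 2) * (b / a)) * (c ^ 2 / a))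
      = -(2 * σ * a ^ (-σ - 1) * b) + σ * (σ + 1) * c ^ 2 *
        (a ^ (-σ - 2) + (-σ - 2) * a ^ (-σ - 2 - 1) * (a + b - a)) := by
    have h₁ : a ^ (-σ - 1) = a ^ (-σ - 2) * a := by rw [← rpow_add_one ha.ne']; ring_nf
    have h₂ : a ^ (-σ - 2) = a ^ (-σ - 2 - 1) * a := by rw [← rpow_add_one ha.ne']; ring_nf
    rw [h₁, h₂]
    field_simp
    ring
  rw [ge_iff_le, hrhs]
  linarith

/-- Let `σ > 0`, `a, b > 0` and `c ∈ ℝ` with `|c| < a + b`. Then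
`(a+b+c)^{−σ} + (a+b−c)^{−σ} − 2 a^{−σ}
  ≥ 2σ a^{−σ−1} (−b + ((σ+1)/2)(1 − (σ+2)(b/a))(c²/a))`. -/
theorem abc_inequality (σ a b c : ℝ) (hσ : 0 < σ) (ha : 0 < a) (hb : 0 < b)
    (hc : |c| < a + b) :
    (a + b + c) ^ (-σ) + (a + b - c) ^ (-σ) - 2 * a ^ (-σ)
      ≥ 2 * σ * a ^ (-σ - 1) *
        (-b + (σ + 1) / 2 * (1 - (σ + 2) * (b / a)) * (c ^ 2 / a)) :=
  abc_inequality_general σ a b c hσ ha hc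
end

section
/- There exist a smooth function Ψ : ℝ^N → ℝ, a smooth function ψ : ℝ^N → ℝ and ε₀ > 0 such that for every 0 < ε ≤ ε₀: L_ε^- Ψ + ψ ≥ 0 on all of ℝ^N, Ψ ≥ 2 on Q_3, and Ψ ≤ 0 on ℝ^N ∖ B_{2√N}; moreover ψ ≤ ψ(0) on ℝ^N and ψ ≤ 0 on ℝ^N ∖ B_{1/4}. -/
set_option maxHeartbeats 1600000


open MeasureTheory Metric

/-- The second-order difference `δu(x,y) = u(x+y) + u(x−y) − 2u(x)`. -/
noncomputable def ddiff {N : ℕ} (u : EuclideanSpace ℝ (Fin N) → ℝ)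
    (x y : EuclideanSpace ℝ (Fin N)) : ℝ :=
  u (x + y) + u (x - y) - 2 * u x

/-- The minimal Pucci-type operator
`L_ε^- u(x) = (1/(2ε²))(α·inf_{z ∈ B_Λ} δu(x,εz) + β·⨍_{B_1} δu(x,εy) dy)`. -/
noncomputable def Lminus {N : ℕ} (Λ α β ε : ℝ) (u : EuclideanSpace ℝ (Fin N) → ℝ)
    (x : EuclideanSpace ℝ (Fin N)) : ℝ :=
  (1 / (2 * ε ^ 2)) *
    (α * sInf ((fun z => ddiff u x (ε • z)) '' ball (0 : EuclideanSpace ℝ (Fin N)) Λ)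
      + β * ⨍ y in ball (0 : EuclideanSpace ℝ (Fin N)) 1, ddiff u x (ε • y))

/-- The open axis-parallel cube with center having coordinates `c : Fin N → ℝ` and side
length `r`. -/
def cube {N : ℕ} (c : Fin N → ℝ) (r : ℝ) : Set (EuclideanSpace ℝ (Fin N)) :=
  {y | ∀ i, |y i - c i| < r / 2}

private lemma exp_aux {u v : ℝ} (hv0 : 0 ≤ v) (hv : v ≤ 1/2) :
    u ^ 2 / 4 - 2 * v ≤ Real.exp (-v) * (Real.exp u + Real.exp (-u)) - 2 := by
  have h1 : 2 + u ^ 2 / 2 ≤ Real.exp u + Real.exp (-u) := by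
    rcases le_total 0 u with h | h
    · have h2 := Real.quadratic_le_exp_of_nonneg h
      have h3 := Real.add_one_le_exp (-u)
      nlinarith
    · have h2 := Real.quadratic_le_exp_of_nonneg (neg_nonneg.2 h)
      have h3 := Real.add_one_le_exp u
      nlinarith
  have h2 : 1 - v ≤ Real.exp (-v) := by linarith [Real.add_one_le_exp (-v)]
  have h3 : (0:ℝ) < Real.exp u + Real.exp (-u) := by positivity
  nlinarith [mul_le_mul_of_nonneg_right h2 h3.le, sq_nonneg u,
    mul_nonneg hv0 (sq_nonneg u)]

private lemma ddiff_gauss {N : ℕ} {γ A : ℝ} (c : ℝ) (hγ : 0 < γ) (hA : 0 ≤ A)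
    (x y : EuclideanSpace ℝ (Fin N)) (hy : γ * ‖y‖ ^ 2 ≤ 1 / 2) :
    A * Real.exp (-(γ * ‖x‖ ^ 2)) * (γ ^ 2 * (inner ℝ x y : ℝ) ^ 2 - 2 * γ * ‖y‖ ^ 2)
      ≤ ddiff (fun z => A * (Real.exp (-(γ * ‖z‖ ^ 2)) - c)) x y := by
  have hxy : ‖x + y‖ ^ 2 = ‖x‖ ^ 2 + 2 * (inner ℝ x y : ℝ) + ‖y‖ ^ 2 := norm_add_sq_real x y
  have hxy' : ‖x - y‖ ^ 2 = ‖x‖ ^ 2 - 2 * (inner ℝ x y : ℝ) + ‖y‖ ^ 2 := norm_sub_sq_real x y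
  have key := exp_aux (u := 2 * γ * (inner ℝ x y : ℝ)) (v := γ * ‖y‖ ^ 2)
    (by positivity) hy
  simp only [ddiff, hxy, hxy']
  have e1 : Real.exp (-(γ * (‖x‖ ^ 2 + 2 * (inner ℝ x y : ℝ) + ‖y‖ ^ 2)))
      = Real.exp (-(γ * ‖x‖ ^ 2)) *
        (Real.exp (-(γ * ‖y‖ ^ 2)) * Real.exp (-(2 * γ * (inner ℝ x y : ℝ)))) := by
    rw [← Real.exp_add, ← Real.exp_add]; ring_nf
  have e2 : Real.exp (-(γ * (‖x‖ ^ 2 - 2 * (inner ℝ x y : ℝ) + ‖y‖ ^ 2)))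
      = Real.exp (-(γ * ‖x‖ ^ 2)) *
        (Real.exp (-(γ * ‖y‖ ^ 2)) * Real.exp (2 * γ * (inner ℝ x y : ℝ))) := by
    rw [← Real.exp_add, ← Real.exp_add]; ring_nf
  rw [e1, e2]
  have hE : (0:ℝ) < Real.exp (-(γ * ‖x‖ ^ 2)) := Real.exp_pos _
  nlinarith [mul_le_mul_of_nonneg_left key (mul_nonneg hA hE.le)]

private lemma integral_inner_sq {N : ℕ} (x : EuclideanSpace ℝ (Fin N)) :
    ‖x‖ ^ 2 * (volume (ball (0 : EuclideanSpace ℝ (Fin N)) 1)).toReal / 4 ^ (N + 1)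
      ≤ ∫ y in ball (0 : EuclideanSpace ℝ (Fin N)) 1, (inner ℝ x y : ℝ) ^ 2 := by
  rcases eq_or_ne x 0 with rfl | hx
  · simp
  · have hnx : (0:ℝ) < ‖x‖ := norm_pos_iff.2 hx
    set e : EuclideanSpace ℝ (Fin N) := (‖x‖⁻¹ : ℝ) • x with he
    have hne : ‖e‖ = 1 := norm_smul_inv_norm hx
    have hxe : ∀ y : EuclideanSpace ℝ (Fin N), (inner ℝ x y : ℝ) = ‖x‖ * (inner ℝ e y : ℝ) := by
      intro y
      have hxx : x = ‖x‖ • e := by rw [he, smul_smul, mul_inv_cancel₀ hnx.ne', one_smul]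
      conv_lhs => rw [hxx]
      rw [real_inner_smul_left]
    have hcont : Continuous fun y : EuclideanSpace ℝ (Fin N) => (inner ℝ e y : ℝ) ^ 2 :=
      (continuous_const.inner continuous_id).pow 2
    have hint : IntegrableOn (fun y : EuclideanSpace ℝ (Fin N) => (inner ℝ e y : ℝ) ^ 2)
        (ball 0 1) volume :=
      (hcont.continuousOn.integrableOn_compact (isCompact_closedBall _ _)).mono_set
        ball_subset_closedBall
    set S : Set (EuclideanSpace ℝ (Fin N)) := ball ((3/4 : ℝ) • e) (1/4 : ℝ) with hS
    have hSsub : S ⊆ ball (0 : EuclideanSpace ℝ (Fin N)) 1 := by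
      intro y hy
      rw [hS, mem_ball, dist_eq_norm] at hy
      rw [mem_ball, dist_zero_right]
      have h1 : ‖(3/4 : ℝ) • e‖ = 3/4 := by
        rw [norm_smul, hne, Real.norm_eq_abs]; norm_num
      calc ‖y‖ = ‖(y - (3/4 : ℝ) • e) + (3/4 : ℝ) • e‖ := by rw [sub_add_cancel]
        _ ≤ ‖y - (3/4 : ℝ) • e‖ + ‖(3/4 : ℝ) • e‖ := norm_add_le _ _
        _ < 1/4 + 3/4 := by rw [h1]; linarith
        _ = 1 := by norm_num
    have step1 : ∫ y in S, (inner ℝ e y : ℝ) ^ 2 ≤ ∫ y in ball 0 1, (inner ℝ e y : ℝ) ^ 2 :=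
      setIntegral_mono_set hint (ae_of_all _ fun y => sq_nonneg _)
        (HasSubset.Subset.eventuallyLE hSsub)
    have step2 : (1/4 : ℝ) * (volume S).toReal ≤ ∫ y in S, (inner ℝ e y : ℝ) ^ 2 := by
      rw [mul_comm]
      apply setIntegral_ge_of_const_le measurableSet_ball measure_ball_lt_top.ne
      · intro y hy
        rw [mem_ball, dist_eq_norm] at hy
        have h1 : (inner ℝ e y : ℝ) = 3/4 + (inner ℝ e (y - (3/4 : ℝ) • e) : ℝ) := by
          rw [inner_sub_right, real_inner_smul_right, real_inner_self_eq_norm_sq, hne]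
          norm_num
        have h2 : |(inner ℝ e (y - (3/4 : ℝ) • e) : ℝ)| ≤ ‖y - (3/4 : ℝ) • e‖ := by
          have := abs_real_inner_le_norm e (y - (3/4 : ℝ) • e)
          rwa [hne, one_mul] at this
        have h3 := abs_le.1 (h2.trans hy.le)
        nlinarith [h3.1, h3.2]
      · exact hint.mono_set hSsub
    have hvol : (volume S).toReal
        = (1/4 : ℝ) ^ N * (volume (ball (0 : EuclideanSpace ℝ (Fin N)) 1)).toReal := by
      rw [hS, Measure.addHaar_ball_of_pos _ _ (by norm_num : (0:ℝ) < 1/4)]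
      rw [ENNReal.toReal_mul, ENNReal.toReal_ofReal (by positivity),
        finrank_euclideanSpace_fin]
    have heq : ∫ y in ball (0 : EuclideanSpace ℝ (Fin N)) 1, (inner ℝ x y : ℝ) ^ 2
        = ‖x‖ ^ 2 * ∫ y in ball (0 : EuclideanSpace ℝ (Fin N)) 1, (inner ℝ e y : ℝ) ^ 2 := by
      simp only [hxe, mul_pow]
      rw [integral_const_mul]
    rw [heq]
    have hV0 : (0:ℝ) ≤ (volume (ball (0 : EuclideanSpace ℝ (Fin N)) 1)).toReal :=
      ENNReal.toReal_nonneg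
    have hfinal : (volume (ball (0 : EuclideanSpace ℝ (Fin N)) 1)).toReal / 4 ^ (N + 1)
        ≤ ∫ y in ball (0 : EuclideanSpace ℝ (Fin N)) 1, (inner ℝ e y : ℝ) ^ 2 := by
      refine le_trans (le_of_eq ?_) (step2.trans step1)
      rw [hvol, one_div, inv_pow, pow_succ, eq_comm]
      have h4 : ((4:ℝ) ^ N) ≠ 0 := by positivity
      field_simp
    rw [mul_div_assoc]
    exact mul_le_mul_of_nonneg_left hfinal (sq_nonneg _)


private lemma cube_norm_bound {N : ℕ} (x : EuclideanSpace ℝ (Fin N))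
    (hx : x ∈ cube (fun _ : Fin N => (0:ℝ)) 3) : ‖x‖ ^ 2 ≤ 9/4 * N := by
  rw [EuclideanSpace.norm_eq, Real.sq_sqrt (by positivity)]
  calc ∑ i, ‖x i‖ ^ 2 ≤ ∑ _i : Fin N, (9/4 : ℝ) := by
        refine Finset.sum_le_sum fun i _ => ?_
        have h1 := hx i
        simp only [sub_zero] at h1
        rw [Real.norm_eq_abs]
        nlinarith [abs_nonneg (x i)]
    _ = 9/4 * N := by
        rw [Finset.sum_const, Finset.card_univ, Fintype.card_fin, nsmul_eq_mul]
        ring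

private lemma psi_max {M κ t : ℝ} (hM : 0 ≤ M) (hκ : 0 ≤ κ) (ht : 0 ≤ t) :
    M * Real.exp (-(κ * t)) * (1 / 16 - t) ≤ M * (1 / 16) := by
  have he1 : Real.exp (-(κ * t)) ≤ 1 := Real.exp_le_one_iff.2 (by nlinarith)
  have he0 : (0:ℝ) < Real.exp (-(κ * t)) := Real.exp_pos _
  rcases le_total t (1/16) with h | h
  · nlinarith [mul_le_mul_of_nonneg_right he1 (by linarith : (0:ℝ) ≤ 1/16 - t), hM]
  · have h2 : M * Real.exp (-(κ * t)) * (1/16 - t) ≤ 0 :=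
      mul_nonpos_of_nonneg_of_nonpos (mul_nonneg hM he0.le) (by linarith)
    nlinarith

private lemma final_arith {Λ α β cN γ κ A M t L : ℝ}
    (hΛ : 1 ≤ Λ) (hβ0 : 0 < β) (hβ1 : β ≤ 1) (hα : α = 1 - β)
    (hcN : 16 ≤ cN) (hγβ : β * γ = 256 * cN * (Λ ^ 2 + 1)) (hγ1 : 1 ≤ γ)
    (hκ : κ = 10 * γ) (hA : 0 < A)
    (hM : M = 22 * A * γ * (Λ ^ 2 + 1) * Real.exp (κ / 64)) (ht : 0 ≤ t)
    (hL : A * Real.exp (-(γ * t)) * γ / 2 * (β * γ * (t / cN) - 2 * α * Λ ^ 2 - 2 * β) ≤ L) :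
    0 ≤ L + M * Real.exp (-(κ * t)) * (1 / 16 - t) := by
  have hΛ1 : (1:ℝ) ≤ Λ ^ 2 := by nlinarith
  have hα0 : 0 ≤ α := by rw [hα]; linarith
  have hα1 : α ≤ 1 := by rw [hα]; linarith
  have hcN0 : (0:ℝ) < cN := by linarith
  have hγ0 : (0:ℝ) < γ := by linarith
  have hκ0 : (0:ℝ) < κ := by rw [hκ]; linarith
  have hEx0 : (0:ℝ) < Real.exp (-(γ * t)) := Real.exp_pos _
  have hEx1 : Real.exp (-(γ * t)) ≤ 1 := Real.exp_le_one_iff.2 (by nlinarith)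
  have hM0 : 0 < M := by rw [hM]; positivity
  have hbg : β * γ * (t / cN) = 256 * (Λ ^ 2 + 1) * t := by
    rw [show β * γ * (t / cN) = (β * γ) * t / cN by ring, hγβ]
    field_simp
  rcases lt_or_ge t (1/64) with hc1 | hc1
  · have e3 : M * Real.exp (-(κ / 64)) = 22 * A * γ * (Λ ^ 2 + 1) := by
      rw [hM, mul_assoc, ← Real.exp_add, add_neg_cancel, Real.exp_zero, mul_one]
    have e1 : Real.exp (-(κ / 64)) ≤ Real.exp (-(κ * t)) :=
      Real.exp_le_exp.2 (by nlinarith)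
    have hψ : 22 * A * γ * (Λ ^ 2 + 1) * (3/64) ≤ M * Real.exp (-(κ * t)) * (1/16 - t) := by
      have h216 : (3:ℝ)/64 ≤ 1/16 - t := by linarith
      calc 22 * A * γ * (Λ ^ 2 + 1) * (3/64) = (M * Real.exp (-(κ/64))) * (3/64) := by rw [e3]
        _ ≤ (M * Real.exp (-(κ * t))) * (1/16 - t) := by
            apply mul_le_mul (mul_le_mul_of_nonneg_left e1 hM0.le) h216 (by norm_num)
            positivity
    have hLlow : -(A * γ * (α * Λ ^ 2 + β)) ≤ L := by
      refine le_trans ?_ hL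
      have hX : -(2*α*Λ^2 + 2*β) ≤ β * γ * (t / cN) - 2*α*Λ^2 - 2*β := by
        have : 0 ≤ β * γ * (t / cN) := by positivity
        linarith
      have hc : (0:ℝ) ≤ 2*α*Λ^2 + 2*β := by positivity
      have key : -(2*α*Λ^2 + 2*β)
          ≤ Real.exp (-(γ * t)) * (β*γ*(t/cN) - 2*α*Λ^2 - 2*β) := by
        nlinarith [mul_nonneg hEx0.le
            (by linarith : (0:ℝ) ≤ (β*γ*(t/cN) - 2*α*Λ^2 - 2*β) + (2*α*Λ^2+2*β)),
          mul_nonneg hc (by linarith : (0:ℝ) ≤ 1 - Real.exp (-(γ * t)))]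
      calc -(A * γ * (α * Λ ^ 2 + β)) = A * γ / 2 * (-(2*α*Λ^2 + 2*β)) := by ring
        _ ≤ A * γ / 2 * (Real.exp (-(γ * t)) * (β*γ*(t/cN) - 2*α*Λ^2 - 2*β)) :=
            mul_le_mul_of_nonneg_left key (by positivity)
        _ = A * Real.exp (-(γ * t)) * γ / 2 * (β * γ * (t / cN) - 2 * α * Λ ^ 2 - 2 * β) := by
            ring
    have hfin : α * Λ ^ 2 + β ≤ Λ ^ 2 + 1 := by nlinarith
    have hQ := mul_le_mul_of_nonneg_left hfin (by positivity : (0:ℝ) ≤ A * γ)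
    have hAg : (0:ℝ) ≤ A * γ * (Λ ^ 2 + 1) := by positivity
    linarith [hQ, hψ, hLlow, hAg]
  · rcases le_or_gt t (1/16) with hc2 | hc2
    · have hX : 0 ≤ β * γ * (t / cN) - 2*α*Λ^2 - 2*β := by
        rw [hbg]; nlinarith
      have hL0 : (0:ℝ) ≤ L :=
        le_trans (mul_nonneg (by positivity) hX) hL
      have hψ0 : 0 ≤ M * Real.exp (-(κ*t)) * (1/16 - t) :=
        mul_nonneg (mul_nonneg hM0.le (Real.exp_pos _).le) (by linarith)
      linarith
    · have hX2 : 128*(Λ^2+1)*t ≤ β*γ*(t/cN) - 2*α*Λ^2 - 2*β := by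
        rw [hbg]; nlinarith
      have hL2 : 64*A*γ*(Λ^2+1)*t*Real.exp (-(γ * t)) ≤ L := by
        refine le_trans ?_ hL
        calc 64*A*γ*(Λ^2+1)*t*Real.exp (-(γ * t))
            = A * Real.exp (-(γ * t)) * γ / 2 * (128*(Λ^2+1)*t) := by ring
          _ ≤ A * Real.exp (-(γ * t)) * γ / 2 * (β*γ*(t/cN) - 2*α*Λ^2 - 2*β) :=
              mul_le_mul_of_nonneg_left hX2 (by positivity)
      have hcmp : M * Real.exp (-(κ*t)) ≤ 64*A*γ*(Λ^2+1)*Real.exp (-(γ * t)) := by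
        have he : Real.exp (κ/64) * Real.exp (-(κ*t)) = Real.exp (κ/64 - κ*t) := by
          rw [← Real.exp_add]; ring_nf
        have hee : Real.exp (κ/64 - κ*t) ≤ Real.exp (-(γ*t)) :=
          Real.exp_le_exp.2 (by rw [hκ]; nlinarith)
        calc M * Real.exp (-(κ*t))
            = 22*A*γ*(Λ^2+1) * (Real.exp (κ/64) * Real.exp (-(κ*t))) := by rw [hM]; ring
          _ = 22*A*γ*(Λ^2+1) * Real.exp (κ/64 - κ*t) := by rw [he]
          _ ≤ 22*A*γ*(Λ^2+1) * Real.exp (-(γ*t)) :=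
              mul_le_mul_of_nonneg_left hee (by positivity)
          _ ≤ 64*A*γ*(Λ^2+1)*Real.exp (-(γ * t)) := by
              nlinarith [mul_nonneg (by positivity : (0:ℝ) ≤ A*γ*(Λ^2+1)) hEx0.le]
      have hψ2 : -(M * Real.exp (-(κ*t)) * t) ≤ M * Real.exp (-(κ*t)) * (1/16 - t) := by
        nlinarith [mul_nonneg hM0.le (Real.exp_pos (-(κ*t))).le]
      have ht16 : (0:ℝ) < t := lt_trans (by norm_num) hc2
      have hx := mul_le_mul_of_nonneg_right hcmp ht16.le
      linarith [hL2, hψ2, hx]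

/-- There exist smooth functions `Ψ, ψ : ℝ^N → ℝ` and `ε₀ > 0` such that for
every `0 < ε ≤ ε₀`: `L_ε^- Ψ + ψ ≥ 0` on `ℝ^N`, `Ψ ≥ 2` on `Q_3`, and `Ψ ≤ 0` outside
`B_{2√N}`; moreover `ψ ≤ ψ(0)` on `ℝ^N` and `ψ ≤ 0` outside `B_{1/4}`. -/
theorem barrier_function (N : ℕ) (hN : 1 ≤ N) (Λ α β : ℝ) (hΛ : 1 ≤ Λ)
    (hβ : β ∈ Set.Ioc (0 : ℝ) 1) (hα : α = 1 - β) :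
    ∃ (Ψ ψ : EuclideanSpace ℝ (Fin N) → ℝ) (ε₀ : ℝ),
      ContDiff ℝ (⊤ : ℕ∞) Ψ ∧ ContDiff ℝ (⊤ : ℕ∞) ψ ∧ 0 < ε₀ ∧
      (∀ x, ψ x ≤ ψ 0) ∧
      (∀ x, x ∉ ball (0 : EuclideanSpace ℝ (Fin N)) (1 / 4) → ψ x ≤ 0) ∧
      (∀ ε : ℝ, 0 < ε → ε ≤ ε₀ →
        (∀ x, 0 ≤ Lminus Λ α β ε Ψ x + ψ x) ∧
        (∀ x ∈ cube (fun _ : Fin N => (0 : ℝ)) 3, 2 ≤ Ψ x) ∧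
        (∀ x, x ∉ ball (0 : EuclideanSpace ℝ (Fin N)) (2 * Real.sqrt N) → Ψ x ≤ 0)) := by
  obtain ⟨hβ0, hβ1⟩ := hβ
  have hα0 : 0 ≤ α := by rw [hα]; linarith
  have hΛ0 : (0:ℝ) < Λ := lt_of_lt_of_le one_pos hΛ
  have hΛ1 : (1:ℝ) ≤ Λ ^ 2 := by nlinarith
  have hN1 : (1:ℝ) ≤ (N:ℝ) := by exact_mod_cast hN
  set cN : ℝ := 4 ^ (N + 1) with hcN
  have hcN16 : (16:ℝ) ≤ cN := by
    rw [hcN]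
    calc (16:ℝ) = 4 ^ 2 := by norm_num
      _ ≤ 4 ^ (N+1) := pow_le_pow_right₀ (by norm_num) (by omega)
  have hcN0 : (0:ℝ) < cN := by rw [hcN]; positivity
  set γ : ℝ := 256 * cN * (Λ ^ 2 + 1) / β with hγdef
  have hγ0 : 0 < γ := by rw [hγdef]; positivity
  have hγβ : β * γ = 256 * cN * (Λ ^ 2 + 1) := by
    rw [hγdef]; field_simp
  have hγ1 : 1 ≤ γ := by
    nlinarith [mul_nonneg (by linarith : (0:ℝ) ≤ 1 - β) hγ0.le]
  set κ : ℝ := 10 * γ with hκdef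
  have hκ0 : 0 < κ := by rw [hκdef]; linarith
  set den : ℝ := Real.exp (-(γ * (9/4 * N))) - Real.exp (-(γ * (4 * N))) with hdendef
  have hden0 : 0 < den := by
    rw [hdendef]
    have : -(γ * (4 * (N:ℝ))) < -(γ * (9/4 * N)) := by nlinarith
    exact sub_pos.2 (Real.exp_lt_exp.2 this)
  set A : ℝ := 2 / den with hAdef
  have hA0 : 0 < A := div_pos two_pos hden0
  set M : ℝ := 22 * A * γ * (Λ ^ 2 + 1) * Real.exp (κ / 64) with hMdef
  have hM0 : 0 < M := by rw [hMdef]; positivity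
  set ε₀ : ℝ := 1 / (Λ * Real.sqrt (2 * γ)) with hε₀def
  have hsq2γ : Real.sqrt (2 * γ) ^ 2 = 2 * γ := Real.sq_sqrt (by positivity)
  have hsqpos : 0 < Real.sqrt (2 * γ) := Real.sqrt_pos.2 (by positivity)
  have hε₀0 : 0 < ε₀ := by rw [hε₀def]; positivity
  set Ψf : EuclideanSpace ℝ (Fin N) → ℝ :=
    fun x => A * (Real.exp (-(γ * ‖x‖ ^ 2)) - Real.exp (-(γ * (4 * N)))) with hΨf
  set ψf : EuclideanSpace ℝ (Fin N) → ℝ :=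
    fun x => M * Real.exp (-(κ * ‖x‖ ^ 2)) * (1 / 16 - ‖x‖ ^ 2) with hψf
  have hsmΨ : ContDiff ℝ (⊤ : ℕ∞) Ψf :=
    contDiff_const.mul ((Real.contDiff_exp.comp
      ((contDiff_const.mul (contDiff_norm_sq ℝ)).neg)).sub contDiff_const)
  have hsmψ : ContDiff ℝ (⊤ : ℕ∞) ψf :=
    (contDiff_const.mul (Real.contDiff_exp.comp
      ((contDiff_const.mul (contDiff_norm_sq ℝ)).neg))).mul
      (contDiff_const.sub (contDiff_norm_sq ℝ))
  clear_value cN γ κ den A M ε₀ Ψf ψf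
  refine ⟨Ψf, ψf, ε₀, hsmΨ, hsmψ, hε₀0, ?_, ?_, ?_⟩
  · -- ψ x ≤ ψ 0
    intro x
    have hx0 : (0:ℝ) ≤ ‖x‖ ^ 2 := by positivity
    have h0 : ψf (0 : EuclideanSpace ℝ (Fin N)) = M * (1/16) := by
      simp only [hψf, norm_zero]
      norm_num [Real.exp_zero]
    rw [h0]
    simp only [hψf]
    exact psi_max hM0.le hκ0.le hx0
  · -- ψ ≤ 0 outside ball 1/4
    intro x hx
    rw [mem_ball, dist_zero_right, not_lt] at hx
    have h1 : (1:ℝ)/16 ≤ ‖x‖ ^ 2 := by nlinarith [norm_nonneg x]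
    simp only [hψf]
    exact mul_nonpos_of_nonneg_of_nonpos
      (mul_nonneg hM0.le (Real.exp_pos _).le) (by linarith)
  · intro ε hε0 hε1
    have hεne : ε ≠ 0 := ne_of_gt hε0
    have hεΛ : γ * (ε ^ 2 * Λ ^ 2) ≤ 1 / 2 := by
      have h2 : ε ^ 2 ≤ (1 / (Λ * Real.sqrt (2 * γ))) ^ 2 := by
        apply pow_le_pow_left₀ hε0.le (by rw [← hε₀def]; exact hε1)
      have h3 : (1 / (Λ * Real.sqrt (2 * γ))) ^ 2 = 1 / (Λ ^ 2 * (2 * γ)) := by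
        rw [div_pow, mul_pow, hsq2γ, one_pow]
      rw [h3] at h2
      have h4 : ε ^ 2 * (Λ ^ 2 * (2 * γ)) ≤ 1 := by
        rw [le_div_iff₀ (by positivity)] at h2
        linarith
      nlinarith
    refine ⟨?_, ?_, ?_⟩
    · -- main inequality
      intro x
      have hE0 : (0:ℝ) < Real.exp (-(γ * ‖x‖ ^ 2)) := Real.exp_pos _
      have hInf : -(2 * A * γ * Λ ^ 2 * ε ^ 2) * Real.exp (-(γ * ‖x‖ ^ 2))
          ≤ sInf ((fun z => ddiff Ψf x (ε • z)) '' ball (0 : EuclideanSpace ℝ (Fin N)) Λ) := by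
        apply le_csInf (Set.Nonempty.image _ ⟨0, mem_ball_self hΛ0⟩)
        rintro b ⟨z, hz, rfl⟩
        rw [mem_ball, dist_zero_right] at hz
        have hz2 : ‖z‖ ^ 2 ≤ Λ ^ 2 := by nlinarith [norm_nonneg z]
        have hcond : γ * ‖ε • z‖ ^ 2 ≤ 1 / 2 := by
          rw [norm_smul, Real.norm_eq_abs, mul_pow, sq_abs]
          nlinarith [mul_nonneg (mul_nonneg hγ0.le (sq_nonneg ε)) (sub_nonneg.2 hz2)]
        rw [hΨf]
        refine le_trans ?_ (ddiff_gauss _ hγ0 hA0.le x (ε • z) hcond)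
        rw [norm_smul, Real.norm_eq_abs, mul_pow, sq_abs]
        nlinarith [mul_nonneg (mul_nonneg (mul_nonneg hA0.le hE0.le) (sq_nonneg γ))
            (sq_nonneg (inner ℝ x (ε • z) : ℝ)),
          mul_nonneg (mul_nonneg (mul_nonneg (mul_nonneg hA0.le hE0.le) hγ0.le) (sq_nonneg ε))
            (sub_nonneg.2 hz2)]
      have hΨc : Continuous Ψf := hsmΨ.continuous
      have hcdd : Continuous fun y : EuclideanSpace ℝ (Fin N) => ddiff Ψf x (ε • y) := by
        simp only [ddiff]
        fun_prop
      have hintF : IntegrableOn (fun y => ddiff Ψf x (ε • y))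
          (ball (0 : EuclideanSpace ℝ (Fin N)) 1) volume :=
        (hcdd.continuousOn.integrableOn_compact (isCompact_closedBall _ _)).mono_set
          ball_subset_closedBall
      have hcont1 : Continuous fun y : EuclideanSpace ℝ (Fin N) => (inner ℝ x y : ℝ) ^ 2 :=
        (continuous_const.inner continuous_id).pow 2
      have hint1 : IntegrableOn (fun y : EuclideanSpace ℝ (Fin N) => (inner ℝ x y : ℝ) ^ 2)
          (ball 0 1) volume :=
        (hcont1.continuousOn.integrableOn_compact (isCompact_closedBall _ _)).mono_set
          ball_subset_closedBall
      have hint2 : IntegrableOn (fun y : EuclideanSpace ℝ (Fin N) => ‖y‖ ^ 2)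
          (ball 0 1) volume :=
        ((continuous_norm.pow 2).continuousOn.integrableOn_compact
          (isCompact_closedBall _ _)).mono_set ball_subset_closedBall
      have hG : ∀ y ∈ ball (0 : EuclideanSpace ℝ (Fin N)) 1,
          (A * Real.exp (-(γ * ‖x‖ ^ 2)) * ε ^ 2 * γ ^ 2) * (inner ℝ x y : ℝ) ^ 2
            - (2 * A * Real.exp (-(γ * ‖x‖ ^ 2)) * ε ^ 2 * γ) * ‖y‖ ^ 2
          ≤ ddiff Ψf x (ε • y) := by
        intro y hy
        rw [mem_ball, dist_zero_right] at hy
        have hy2 : ‖y‖ ^ 2 ≤ Λ ^ 2 := by nlinarith [norm_nonneg y]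
        have hcond : γ * ‖ε • y‖ ^ 2 ≤ 1 / 2 := by
          rw [norm_smul, Real.norm_eq_abs, mul_pow, sq_abs]
          nlinarith [mul_nonneg (mul_nonneg hγ0.le (sq_nonneg ε)) (sub_nonneg.2 hy2)]
        rw [hΨf]
        refine le_trans (le_of_eq ?_) (ddiff_gauss _ hγ0 hA0.le x (ε • y) hcond)
        simp only [real_inner_smul_right, norm_smul, Real.norm_eq_abs, mul_pow, sq_abs]
        ring
      have hmono' : ∫ y in ball (0 : EuclideanSpace ℝ (Fin N)) 1,
            ((A * Real.exp (-(γ * ‖x‖ ^ 2)) * ε ^ 2 * γ ^ 2) * (inner ℝ x y : ℝ) ^ 2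
              - (2 * A * Real.exp (-(γ * ‖x‖ ^ 2)) * ε ^ 2 * γ) * ‖y‖ ^ 2)
          ≤ ∫ y in ball (0 : EuclideanSpace ℝ (Fin N)) 1, ddiff Ψf x (ε • y) :=
        setIntegral_mono_on ((hint1.const_mul _).sub (hint2.const_mul _)) hintF
          measurableSet_ball hG
      have hIeq : ∫ y in ball (0 : EuclideanSpace ℝ (Fin N)) 1,
            ((A * Real.exp (-(γ * ‖x‖ ^ 2)) * ε ^ 2 * γ ^ 2) * (inner ℝ x y : ℝ) ^ 2
              - (2 * A * Real.exp (-(γ * ‖x‖ ^ 2)) * ε ^ 2 * γ) * ‖y‖ ^ 2)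
          = (A * Real.exp (-(γ * ‖x‖ ^ 2)) * ε ^ 2 * γ ^ 2)
              * (∫ y in ball (0 : EuclideanSpace ℝ (Fin N)) 1, (inner ℝ x y : ℝ) ^ 2)
            - (2 * A * Real.exp (-(γ * ‖x‖ ^ 2)) * ε ^ 2 * γ)
              * (∫ y in ball (0 : EuclideanSpace ℝ (Fin N)) 1, ‖y‖ ^ 2) := by
        rw [integral_sub (hint1.const_mul _) (hint2.const_mul _), integral_const_mul,
          integral_const_mul]
      have hV0 : (0:ℝ) < (volume (ball (0 : EuclideanSpace ℝ (Fin N)) 1)).toReal :=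
        ENNReal.toReal_pos (measure_ball_pos _ _ one_pos).ne' measure_ball_lt_top.ne
      have hJ1 : ‖x‖ ^ 2 * (volume (ball (0 : EuclideanSpace ℝ (Fin N)) 1)).toReal / cN
          ≤ ∫ y in ball (0 : EuclideanSpace ℝ (Fin N)) 1, (inner ℝ x y : ℝ) ^ 2 := by
        rw [hcN]; exact integral_inner_sq x
      have hJ2 : (∫ y in ball (0 : EuclideanSpace ℝ (Fin N)) 1, ‖y‖ ^ 2)
          ≤ (volume (ball (0 : EuclideanSpace ℝ (Fin N)) 1)).toReal := by
        have h1 : (∫ y in ball (0 : EuclideanSpace ℝ (Fin N)) 1, ‖y‖ ^ 2)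
            ≤ ∫ _y in ball (0 : EuclideanSpace ℝ (Fin N)) 1, (1:ℝ) :=
          setIntegral_mono_on hint2 (integrableOn_const measure_ball_lt_top.ne)
            measurableSet_ball (fun y hy => by
              rw [mem_ball, dist_zero_right] at hy
              nlinarith [norm_nonneg y])
        rw [setIntegral_const, smul_eq_mul, mul_one] at h1
        exact h1
      have hMean : A * Real.exp (-(γ * ‖x‖ ^ 2)) * ε ^ 2 * γ ^ 2 * (‖x‖ ^ 2 / cN)
            - 2 * A * Real.exp (-(γ * ‖x‖ ^ 2)) * ε ^ 2 * γ
          ≤ ⨍ y in ball (0 : EuclideanSpace ℝ (Fin N)) 1, ddiff Ψf x (ε • y) := by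
        rw [setAverage_eq, smul_eq_mul]
        have hC1 : (0:ℝ) ≤ A * Real.exp (-(γ * ‖x‖ ^ 2)) * ε ^ 2 * γ ^ 2 := by positivity
        have hC2 : (0:ℝ) ≤ 2 * A * Real.exp (-(γ * ‖x‖ ^ 2)) * ε ^ 2 * γ := by positivity
        have hb : A * Real.exp (-(γ * ‖x‖ ^ 2)) * ε ^ 2 * γ ^ 2
              * (‖x‖ ^ 2 * (volume (ball (0 : EuclideanSpace ℝ (Fin N)) 1)).toReal / cN)
            - 2 * A * Real.exp (-(γ * ‖x‖ ^ 2)) * ε ^ 2 * γ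
              * (volume (ball (0 : EuclideanSpace ℝ (Fin N)) 1)).toReal
            ≤ ∫ y in ball (0 : EuclideanSpace ℝ (Fin N)) 1, ddiff Ψf x (ε • y) := by
          rw [hIeq] at hmono'
          have k1 := mul_le_mul_of_nonneg_left hJ1 hC1
          have k2 := mul_le_mul_of_nonneg_left hJ2 hC2
          linarith
        have h5 := mul_le_mul_of_nonneg_left hb
          (inv_nonneg.2 hV0.le)
        refine le_trans (le_of_eq ?_) h5
        field_simp
      have hL : A * Real.exp (-(γ * ‖x‖ ^ 2)) * γ / 2
            * (β * γ * (‖x‖ ^ 2 / cN) - 2 * α * Λ ^ 2 - 2 * β)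
          ≤ Lminus Λ α β ε Ψf x := by
        simp only [Lminus]
        have hsum : A * Real.exp (-(γ * ‖x‖ ^ 2)) * ε ^ 2 * γ
              * (β * γ * (‖x‖ ^ 2 / cN) - 2 * α * Λ ^ 2 - 2 * β)
            ≤ α * sInf ((fun z => ddiff Ψf x (ε • z)) '' ball (0:EuclideanSpace ℝ (Fin N)) Λ)
              + β * ⨍ y in ball (0:EuclideanSpace ℝ (Fin N)) 1, ddiff Ψf x (ε • y) := by
          have k1 := mul_le_mul_of_nonneg_left hInf hα0
          have k2 := mul_le_mul_of_nonneg_left hMean hβ0.le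
          calc A * Real.exp (-(γ * ‖x‖ ^ 2)) * ε ^ 2 * γ
                * (β * γ * (‖x‖ ^ 2 / cN) - 2 * α * Λ ^ 2 - 2 * β)
              = α * (-(2 * A * γ * Λ ^ 2 * ε ^ 2) * Real.exp (-(γ * ‖x‖ ^ 2)))
                + β * (A * Real.exp (-(γ * ‖x‖ ^ 2)) * ε ^ 2 * γ ^ 2 * (‖x‖ ^ 2 / cN)
                  - 2 * A * Real.exp (-(γ * ‖x‖ ^ 2)) * ε ^ 2 * γ) := by ring
            _ ≤ _ := add_le_add k1 k2
        refine le_trans (le_of_eq ?_) (mul_le_mul_of_nonneg_left hsum (by positivity))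
        field_simp
      have hfin := final_arith hΛ hβ0 hβ1 hα hcN16 hγβ hγ1 hκdef hA0 hMdef
        (by positivity : (0:ℝ) ≤ ‖x‖ ^ 2) hL
      simp only [hψf]
      exact hfin
    · -- Ψ ≥ 2 on cube
      intro x hx
      have ht := cube_norm_bound x hx
      have h5 : Real.exp (-(γ * (9/4 * N))) ≤ Real.exp (-(γ * ‖x‖ ^ 2)) :=
        Real.exp_le_exp.2 (by nlinarith)
      have h6 : A * den = 2 := by
        rw [hAdef]; field_simp
      simp only [hΨf]
      calc (2:ℝ) = A * den := h6.symm
        _ = A * (Real.exp (-(γ * (9/4 * N))) - Real.exp (-(γ * (4 * N)))) := by rw [hdendef]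
        _ ≤ A * (Real.exp (-(γ * ‖x‖ ^ 2)) - Real.exp (-(γ * (4 * N)))) := by
            apply mul_le_mul_of_nonneg_left _ hA0.le
            linarith
    · -- Ψ ≤ 0 outside ball 2√N
      intro x hx
      rw [mem_ball, dist_zero_right, not_lt] at hx
      have h1 : (4:ℝ) * N ≤ ‖x‖ ^ 2 := by
        have h2 : (0:ℝ) ≤ Real.sqrt N := Real.sqrt_nonneg _
        have h3 : Real.sqrt (N:ℝ) ^ 2 = N := Real.sq_sqrt (by positivity)
        nlinarith [norm_nonneg x]
      have h4 : Real.exp (-(γ * ‖x‖ ^ 2)) ≤ Real.exp (-(γ * (4 * N))) :=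
        Real.exp_le_exp.2 (by nlinarith)
      simp only [hΨf]
      have h7 : Real.exp (-(γ * ‖x‖ ^ 2)) - Real.exp (-(γ * (4 * N))) ≤ 0 := by linarith
      exact mul_nonpos_of_nonneg_of_nonpos hA0.le h7
end

section
/- Let 0 < ε₀ < 1 and ρ > 0. There exists a constant c > 0, depending only on N, Λ, α, β, ε₀ and ρ, such that the following holds: if u is a bounded Borel measurable function on ℝ^N satisfying L_ε^- u ≤ ρ in Q_{10√N} and u ≥ 0 in ℝ^N, for some ε with ε₀/2 ≤ ε ≤ ε₀, and if |{u > K} ∩ Q_1| > c/K for some K > 0, then u > 1 everywhere in Q_1. -/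
/-!
Since `u ≥ 0`, the bound `L_ε^- u ≤ ρ` yields the mean value inequality
`u x ≥ (β / 2) ⨍_{B_ε(x)} u - ρ` at every point of `Q_{10√N}`. Consequently, if `u ≥ m` on
`B_{ε/2}(y)` then `u ≥ β 4^{-N} m / 2 - ρ` on `B_{ε/2}(y')` whenever `|y - y'| ≤ ε/2`, because
`B_ε(x)` contains a ball of radius `ε/4` inside `B_{ε/2}(y)` for every `x ∈ B_{ε/2}(y')`.
By the first moment method some ball `B_{ε/2}(x₀)` meets `S = {u > K} ∩ Q_1` in measure at least
`|S| |B_{ε/2}| / |B_{√N/2 + ε/2}|`, so the mean value inequality gives `u ≳ K |S| > c` on it.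
Iterating the step `O(√N / ε₀)` times along the segment from `x₀` to a point of `Q_1` loses a
fixed factor and an additive `ρ` each time; `c` is chosen large enough to absorb these losses.
-/

open MeasureTheory Metric

theorem measureReal_ball_pos {F : Type*} [NormedAddCommGroup F] [NormedSpace ℝ F]
    [MeasurableSpace F] [FiniteDimensional ℝ F] (μ : Measure F) [μ.IsAddHaarMeasure] (x : F)
    {r : ℝ} (hr : 0 < r) : 0 < μ.real (ball x r) :=
  ENNReal.toReal_pos (measure_ball_pos μ x hr).ne' measure_ball_lt_top.ne

section Haar

variable {F : Type*} [NormedAddCommGroup F] [NormedSpace ℝ F] [MeasurableSpace F] [BorelSpace F]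
  [FiniteDimensional ℝ F] (μ : Measure F) [μ.IsAddHaarMeasure]

theorem lintegral_measure_inter_ball {S : Set F} (hS : MeasurableSet S) (r : ℝ) :
    ∫⁻ x, μ (S ∩ ball x r) ∂μ = μ S * μ (ball 0 r) := by
  set T : Set (F × F) := {p | p.2 ∈ S ∧ dist p.2 p.1 < r}
  have hT : MeasurableSet T :=
    (hS.preimage measurable_snd).inter
      (measurableSet_lt (measurable_snd.dist measurable_fst) measurable_const)
  calc ∫⁻ x, μ (S ∩ ball x r) ∂μ = μ.prod μ T := (Measure.prod_apply hT).symm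
    _ = ∫⁻ y, S.indicator (fun _ => μ (ball 0 r)) y ∂μ := by
      rw [Measure.prod_apply_symm hT]
      refine lintegral_congr fun y => ?_
      by_cases hy : y ∈ S
      · rw [Set.indicator_of_mem hy, ← Measure.addHaar_ball_center μ y]
        congr 1
        ext x
        simp [T, hy, dist_comm]
      · simp [T, hy]
    _ = μ S * μ (ball 0 r) := by rw [lintegral_indicator_const hS, mul_comm]

/-- First moment method for `x ↦ μ (S ∩ ball x r)`, whose integral is `μ S * μ (ball 0 r)` and
which vanishes off `ball 0 (R + r)`. -/
theorem exists_measureReal_inter_ball_ge {S : Set F} (hS : MeasurableSet S) {R r : ℝ}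
    (hSR : S ⊆ closedBall 0 R) (hRr : 0 < R + r) :
    ∃ x₀ ∈ ball (0 : F) (R + r),
      μ.real S * μ.real (ball 0 r) ≤ μ.real (S ∩ ball x₀ r) * μ.real (ball 0 (R + r)) := by
  have hsupp : (Function.support fun x => μ (S ∩ ball x r)) ⊆ ball 0 (R + r) := by
    intro x hx
    obtain ⟨y, hyS, hyx⟩ := nonempty_of_measure_ne_zero hx
    rw [mem_ball_zero_iff]
    calc ‖x‖ ≤ ‖y‖ + dist y x := by simpa [dist_eq_norm', norm_sub_rev] using norm_le_insert' x y
      _ < R + r := add_lt_add_of_le_of_lt (mem_closedBall_zero_iff.mp (hSR hyS)) (mem_ball.mp hyx)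
  have hint : ∫⁻ x in ball 0 (R + r), μ (S ∩ ball x r) ∂μ = μ S * μ (ball 0 r) := by
    rw [setLIntegral_eq_of_support_subset hsupp, lintegral_measure_inter_ball μ hS]
  have hfin : μ S * μ (ball 0 r) ≠ ⊤ :=
    ENNReal.mul_ne_top ((measure_mono hSR).trans_lt measure_closedBall_lt_top).ne
      measure_ball_lt_top.ne
  obtain ⟨x₀, hx₀, hle⟩ := exists_setLAverage_le (μ := μ)
    (measure_ball_pos μ 0 hRr).ne' measurableSet_ball.nullMeasurableSet (hint ▸ hfin)
  rw [setLAverage_eq, hint,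
    ENNReal.div_le_iff (measure_ball_pos μ 0 hRr).ne' measure_ball_lt_top.ne] at hle
  refine ⟨x₀, hx₀, ?_⟩
  simpa only [measureReal_def, ENNReal.toReal_mul] using ENNReal.toReal_mono
    (ENNReal.mul_ne_top (measure_ne_top_of_subset Set.inter_subset_right measure_ball_lt_top.ne)
      measure_ball_lt_top.ne) hle

end Haar

theorem mul_measureReal_le_setIntegral {X : Type*} [MeasurableSpace X] {μ : Measure X}
    {f : X → ℝ} {s A : Set X} {m : ℝ} (hf : IntegrableOn f s μ) (hf0 : ∀ x, 0 ≤ f x)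
    (hA : MeasurableSet A) (hAs : A ⊆ s) (hs : μ s ≠ ⊤) (hm : ∀ x ∈ A, m ≤ f x) :
    m * μ.real A ≤ ∫ x in s, f x ∂μ :=
  calc m * μ.real A ≤ ∫ x in A, f x ∂μ :=
        setIntegral_ge_of_const_le_real hA (measure_ne_top_of_subset hAs hs) hm (hf.mono_set hAs)
    _ ≤ ∫ x in s, f x ∂μ :=
        setIntegral_mono_set hf (Filter.Eventually.of_forall hf0) hAs.eventuallyLE

theorem ball_subset_ball_inter_ball {F : Type*} [NormedAddCommGroup F] [NormedSpace ℝ F]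
    {x y : F} {ε : ℝ} (h : ‖y - x‖ < ε) :
    ball (x + (3 / 4 : ℝ) • (y - x)) (ε / 4) ⊆ ball y (ε / 2) ∩ ball x ε := by
  have hy : dist (x + (3 / 4 : ℝ) • (y - x)) y = 1 / 4 * ‖y - x‖ := by
    rw [dist_eq_norm, show x + (3 / 4 : ℝ) • (y - x) - y = (-(1 / 4) : ℝ) • (y - x) by module,
      norm_smul]
    norm_num
  have hx : dist (x + (3 / 4 : ℝ) • (y - x)) x = 3 / 4 * ‖y - x‖ := by
    rw [dist_eq_norm, add_sub_cancel_left, norm_smul]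
    norm_num
  intro z hz
  rw [mem_ball] at hz
  exact ⟨mem_ball.mpr (by linarith [dist_triangle z (x + (3 / 4 : ℝ) • (y - x)) y]),
    mem_ball.mpr (by linarith [dist_triangle z (x + (3 / 4 : ℝ) • (y - x)) x])⟩

theorem iterate_of_step {F α : Type*} [NormedAddCommGroup F] [NormedSpace ℝ F] {D : Set F}
    (hD : Convex ℝ D) {P : F → α → Prop} {g : α → α} {d : ℝ}
    (hstep : ∀ y₀ ∈ D, ∀ y₁ ∈ D, ‖y₁ - y₀‖ ≤ d → ∀ m, P y₀ m → P y₁ (g m)) (n : ℕ) :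
    ∀ x₀ ∈ D, ∀ x ∈ D, ‖x - x₀‖ ≤ n * d → ∀ m, P x₀ m → P x (g^[n] m) := by
  induction n with
  | zero =>
    intro x₀ _ x _ hx m hm
    rw [Nat.cast_zero, zero_mul, norm_le_zero_iff, sub_eq_zero] at hx
    rwa [hx]
  | succ n ih =>
    intro x₀ hx₀ x hx hdist m hm
    set t : ℝ := 1 / (n + 1)
    have ht : t ∈ Set.Icc (0 : ℝ) 1 :=
      ⟨by positivity, div_le_one_of_le₀ (by linarith) (by positivity)⟩
    have htn : t * (n + 1) = 1 := by simp only [t]; field_simp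
    have hx₁ := hD.add_smul_sub_mem hx₀ hx ht
    have hdist' : ‖x - x₀‖ ≤ (n + 1) * d := by exact_mod_cast hdist
    refine ih _ hx₁ x hx ?_ (g m) (hstep x₀ hx₀ _ hx₁ ?_ m hm)
    · rw [show x - (x₀ + t • (x - x₀)) = (1 - t) • (x - x₀) by module, norm_smul,
        Real.norm_of_nonneg (sub_nonneg.mpr ht.2)]
      calc (1 - t) * ‖x - x₀‖ ≤ (1 - t) * ((n + 1) * d) := by gcongr; linarith [ht.2]
        _ = n * d := by linear_combination (-d) * htn
    · rw [add_sub_cancel_left, norm_smul, Real.norm_of_nonneg ht.1]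
      calc t * ‖x - x₀‖ ≤ t * ((n + 1) * d) := by gcongr
        _ = d := by linear_combination d * htn

theorem pow_mul_sub_le_iterate {θ ρ : ℝ} (hθ0 : 0 ≤ θ) (hθ1 : θ ≤ 1) (hρ : 0 ≤ ρ) (n : ℕ)
    (m : ℝ) : θ ^ n * m - n * ρ ≤ (fun m => θ * m - ρ)^[n] m := by
  induction n with
  | zero => simp
  | succ n ih =>
    rw [Function.iterate_succ_apply']
    have : θ * (n * ρ) ≤ n * ρ := mul_le_of_le_one_left (by positivity) hθ1
    rw [pow_succ', Nat.cast_succ]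
    linear_combination this + θ * ih

section Euclidean

variable {N : ℕ}

theorem isOpen_cube (c : Fin N → ℝ) (r : ℝ) : IsOpen (cube c r) := by
  simp only [cube, Set.ofPred_forall]
  exact isOpen_iInter_of_finite fun i => isOpen_lt (by fun_prop) continuous_const

theorem norm_le_of_mem_cube {r : ℝ} (hr : 0 ≤ r) {x : EuclideanSpace ℝ (Fin N)}
    (hx : x ∈ cube 0 r) : ‖x‖ ≤ √N * (r / 2) := by
  rw [EuclideanSpace.norm_eq, ← Real.sqrt_sq (by positivity : 0 ≤ r / 2),
    ← Real.sqrt_mul (Nat.cast_nonneg N)]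
  refine Real.sqrt_le_sqrt ?_
  calc ∑ i, ‖x i‖ ^ 2 ≤ ∑ _i : Fin N, (r / 2) ^ 2 := by
        gcongr with i
        simpa using (hx i).le
    _ = N * (r / 2) ^ 2 := by simp

theorem ball_subset_cube_ten_sqrt :
    ball (0 : EuclideanSpace ℝ (Fin N)) (√N / 2 + 1) ⊆ cube 0 (10 * √N) := by
  intro x hx i
  have h1 : (1 : ℝ) ≤ √N := Real.one_le_sqrt.mpr (by exact_mod_cast i.pos)
  have := (PiLp.norm_apply_le x i).trans_lt (mem_ball_zero_iff.mp hx)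
  simp only [Pi.zero_apply, sub_zero, Real.norm_eq_abs] at this ⊢
  linarith

theorem measureReal_ball_eq_pow_mul (x : EuclideanSpace ℝ (Fin N)) {r : ℝ} (hr : 0 < r) :
    volume.real (ball x r) = r ^ N * volume.real (ball (0 : EuclideanSpace ℝ (Fin N)) 1) := by
  rw [measureReal_def, Measure.addHaar_ball_of_pos _ _ hr, ENNReal.toReal_mul,
    ENNReal.toReal_ofReal (by positivity), finrank_euclideanSpace_fin, measureReal_def]

/-- The mean value inequality `u x ≥ (β / 2) ⨍_{B_ε(x)} u - ρ`, multiplied out. -/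
def SuperMeanValueAt (β ε ρ : ℝ) (u : EuclideanSpace ℝ (Fin N) → ℝ)
    (x : EuclideanSpace ℝ (Fin N)) : Prop :=
  β * ∫ z in ball x ε, u z ≤ 2 * volume.real (ball x ε) * (ρ + u x)

variable {u : EuclideanSpace ℝ (Fin N) → ℝ}

theorem integrableOn_ball_comp_of_bounded {C : ℝ} (hu : Measurable u) (hC : ∀ x, |u x| ≤ C)
    {f : EuclideanSpace ℝ (Fin N) → EuclideanSpace ℝ (Fin N)} (hf : Measurable f)
    (x : EuclideanSpace ℝ (Fin N)) (r : ℝ) :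
    IntegrableOn (fun y => u (f y)) (ball x r) :=
  Measure.integrableOn_of_bounded measure_ball_lt_top.ne (hu.comp hf).aestronglyMeasurable
    (ae_of_all _ fun y => (Real.norm_eq_abs _).trans_le (hC (f y)))

theorem neg_two_mul_le_sInf_ddiff {Λ : ℝ} (hΛ : 0 < Λ) (hpos : ∀ x, 0 ≤ u x)
    (x : EuclideanSpace ℝ (Fin N)) (ε : ℝ) :
    -(2 * u x) ≤ sInf ((fun z => ddiff u x (ε • z)) '' ball 0 Λ) :=
  le_csInf ((nonempty_ball.mpr hΛ).image _) <| by
    rintro _ ⟨z, -, rfl⟩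
    show -(2 * u x) ≤ u (x + ε • z) + u (x - ε • z) - 2 * u x
    linarith [hpos (x + ε • z), hpos (x - ε • z)]

theorem setAverage_ddiff_eq {C : ℝ} (hu : Measurable u) (hC : ∀ x, |u x| ≤ C)
    (x : EuclideanSpace ℝ (Fin N)) (ε : ℝ) :
    ⨍ y in ball 0 1, ddiff u x (ε • y) =
      (volume.real (ball (0 : EuclideanSpace ℝ (Fin N)) 1))⁻¹ *
        ((∫ y in ball 0 1, u (x + ε • y)) + ∫ y in ball 0 1, u (x - ε • y)) - 2 * u x := by
  have hplus := integrableOn_ball_comp_of_bounded hu hC (f := fun y => x + ε • y) (by fun_prop) 0 1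
  have hminus := integrableOn_ball_comp_of_bounded hu hC (f := fun y => x - ε • y) (by fun_prop) 0 1
  have hvol := (measureReal_ball_pos volume (0 : EuclideanSpace ℝ (Fin N)) one_pos).ne'
  rw [setAverage_eq, smul_eq_mul]
  simp only [ddiff]
  rw [integral_sub (f := fun y => u (x + ε • y) + u (x - ε • y)) (hplus.add hminus)
      (integrableOn_const measure_ball_lt_top.ne),
    integral_add hplus hminus, setIntegral_const, smul_eq_mul]
  field_simp

theorem integral_ball_comp_homothety (x : EuclideanSpace ℝ (Fin N)) {ε : ℝ} (hε : 0 < ε) :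
    ∫ y in ball 0 1, u (x + ε • y) = (ε ^ N)⁻¹ * ∫ z in ball x ε, u z := by
  have htranslate := (measurePreserving_add_left volume x).setIntegral_preimage_emb
    (measurableEmbedding_addLeft x) u (ball x ε)
  rw [preimage_add_ball, sub_self] at htranslate
  rw [Measure.setIntegral_comp_smul_of_pos volume (fun z => u (x + z)) _ hε,
    smul_unitBall_of_pos hε, finrank_euclideanSpace_fin, smul_eq_mul, htranslate]

/-- Since `u ≥ 0`, the infimum term of `L_ε^- u x` is at least `-2 α u x`, and the values
`u (x - ε y)` can be dropped from the average term. -/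
theorem superMeanValueAt_of_Lminus_le {Λ α β ε ρ C : ℝ} (hΛ : 0 < Λ) (hβ0 : 0 ≤ β)
    (hβ1 : β ≤ 1) (hα : α = 1 - β) (hε0 : 0 < ε) (hε1 : ε ≤ 1) (hρ : 0 ≤ ρ) (hu : Measurable u)
    (hC : ∀ x, |u x| ≤ C) (hpos : ∀ x, 0 ≤ u x) {x : EuclideanSpace ℝ (Fin N)}
    (hL : Lminus Λ α β ε u x ≤ ρ) : SuperMeanValueAt β ε ρ u x := by
  have hv := measureReal_ball_pos volume (0 : EuclideanSpace ℝ (Fin N)) one_pos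
  have hJ' : 0 ≤ ∫ y in ball (0 : EuclideanSpace ℝ (Fin N)) 1, u (x - ε • y) :=
    setIntegral_nonneg measurableSet_ball fun y _ => hpos _
  have hinf := neg_two_mul_le_sInf_ddiff hΛ hpos x ε
  rw [Lminus, one_div, inv_mul_le_iff₀ (by positivity), setAverage_ddiff_eq hu hC,
    integral_ball_comp_homothety x hε0] at hL
  rw [SuperMeanValueAt, measureReal_ball_eq_pow_mul x hε0]
  generalize volume.real (ball (0 : EuclideanSpace ℝ (Fin N)) 1) = v at *
  generalize ∫ y in ball (0 : EuclideanSpace ℝ (Fin N)) 1, u (x - ε • y) = J' at *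
  generalize ∫ z in ball x ε, u z = I at *
  generalize sInf ((fun z => ddiff u x (ε • z)) '' ball 0 Λ) = s at *
  have hmean : β * (v⁻¹ * ((ε ^ N)⁻¹ * I)) ≤ 2 * (ρ + u x) := by
    have hαs : α * -(2 * u x) ≤ α * s := mul_le_mul_of_nonneg_left hinf (by linarith)
    have hερ : ε ^ 2 * ρ ≤ ρ := mul_le_of_le_one_left hρ (pow_le_one₀ hε0.le hε1)
    have hJ'β : 0 ≤ β * (v⁻¹ * J') := by positivity
    subst hα
    linarith
  calc β * I = β * (v⁻¹ * ((ε ^ N)⁻¹ * I)) * (ε ^ N * v) := by field_simp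
    _ ≤ 2 * (ρ + u x) * (ε ^ N * v) := by gcongr
    _ = 2 * (ε ^ N * v) * (ρ + u x) := by ring

theorem mul_measureReal_le_integral_ball (hu : LocallyIntegrable u) (hpos : ∀ x, 0 ≤ u x)
    {S : Set (EuclideanSpace ℝ (Fin N))} (hS : MeasurableSet S) {x : EuclideanSpace ℝ (Fin N)}
    {r : ℝ} (hSx : S ⊆ ball x r) {m : ℝ} (hm : ∀ z ∈ S, m ≤ u z) :
    m * volume.real S ≤ ∫ z in ball x r, u z :=
  mul_measureReal_le_setIntegral
    ((hu.integrableOn_isCompact (isCompact_closedBall x r)).mono_set ball_subset_closedBall) hpos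
    hS hSx measure_ball_lt_top.ne hm

variable {β ε ρ : ℝ}

/-- `B_ε(x)` contains a ball of radius `ε / 4` inside `B_{ε/2}(y₀)`. -/
theorem lower_bound_step (hβ : 0 ≤ β) (hε : 0 < ε) (hu : LocallyIntegrable u)
    (hpos : ∀ x, 0 ≤ u x) {y₀ y₁ : EuclideanSpace ℝ (Fin N)}
    (hmv : ∀ x ∈ ball y₁ (ε / 2), SuperMeanValueAt β ε ρ u x)
    (hd : ‖y₁ - y₀‖ ≤ ε / 2) {m : ℝ} (hm : ∀ z ∈ ball y₀ (ε / 2), m ≤ u z) :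
    ∀ x ∈ ball y₁ (ε / 2), β / (2 * 4 ^ N) * m - ρ ≤ u x := by
  intro x hx
  have hxy₀ : ‖y₀ - x‖ < ε := by
    rw [← dist_eq_norm]
    linarith [dist_triangle y₀ y₁ x, dist_eq_norm y₁ y₀, dist_comm y₀ y₁, mem_ball'.mp hx]
  have hsub := ball_subset_ball_inter_ball hxy₀
  have hlow := mul_measureReal_le_integral_ball hu hpos measurableSet_ball
    (fun z hz => (hsub hz).2) (fun z hz => hm z (hsub hz).1)
  have hmvx : β * ∫ z in ball x ε, u z ≤ _ := hmv x hx
  rw [measureReal_ball_eq_pow_mul _ (by positivity), div_pow] at hlow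
  rw [measureReal_ball_eq_pow_mul x hε] at hmvx
  set v := volume.real (ball (0 : EuclideanSpace ℝ (Fin N)) 1)
  have hv : 0 < v := measureReal_ball_pos volume 0 one_pos
  have key : β / (2 * 4 ^ N) * m * (2 * (ε ^ N * v)) ≤ (ρ + u x) * (2 * (ε ^ N * v)) :=
    calc β / (2 * 4 ^ N) * m * (2 * (ε ^ N * v)) = β * (m * (ε ^ N / 4 ^ N * v)) := by
          field_simp
      _ ≤ β * ∫ z in ball x ε, u z := by gcongr
      _ ≤ (ρ + u x) * (2 * (ε ^ N * v)) := by linarith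
  linarith [le_of_mul_le_mul_right key (by positivity)]

theorem lower_bound_propagates {R : ℝ} (hβ0 : 0 ≤ β) (hβ1 : β ≤ 1) (hε : 0 < ε)
    (hρ : 0 ≤ ρ) (hu : LocallyIntegrable u) (hpos : ∀ x, 0 ≤ u x)
    (hmv : ∀ x ∈ ball (0 : EuclideanSpace ℝ (Fin N)) (R + ε / 2), SuperMeanValueAt β ε ρ u x)
    {x₀ x : EuclideanSpace ℝ (Fin N)} (hx₀ : x₀ ∈ ball 0 R) (hx : x ∈ ball 0 R) {n : ℕ}
    (hn : ‖x - x₀‖ ≤ n * (ε / 2)) {m : ℝ} (hm : ∀ z ∈ ball x₀ (ε / 2), m ≤ u z) :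
    (β / (2 * 4 ^ N)) ^ n * m - n * ρ ≤ u x := by
  have hθ1 : β / (2 * 4 ^ N) ≤ 1 :=
    div_le_one_of_le₀ (by linarith [one_le_pow₀ (M₀ := ℝ) (by norm_num : (1 : ℝ) ≤ 4) (n := N)])
      (by positivity)
  have hstep : ∀ y₀ ∈ ball (0 : EuclideanSpace ℝ (Fin N)) R, ∀ y₁ ∈ ball 0 R,
      ‖y₁ - y₀‖ ≤ ε / 2 → ∀ m, (∀ z ∈ ball y₀ (ε / 2), m ≤ u z) →
        ∀ z ∈ ball y₁ (ε / 2), β / (2 * 4 ^ N) * m - ρ ≤ u z :=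
    fun y₀ _ y₁ hy₁ hd m hm => lower_bound_step hβ0 hε hu hpos
      (fun z hz => hmv z (ball_subset_ball' (by linarith [mem_ball.mp hy₁]) hz)) hd hm
  exact (pow_mul_sub_le_iterate (by positivity) hθ1 hρ n m).trans
    (iterate_of_step (convex_ball 0 R) hstep n x₀ hx₀ x hx hn m hm x
      (mem_ball_self (by positivity)))

theorem exists_ball_lower_bound {R K : ℝ} (hβ : 0 ≤ β) (hε : 0 < ε)
    (hu : LocallyIntegrable u) (hpos : ∀ x, 0 ≤ u x) (hR : 0 ≤ R)
    (hmv : ∀ x ∈ ball (0 : EuclideanSpace ℝ (Fin N)) (R + ε), SuperMeanValueAt β ε ρ u x)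
    {S : Set (EuclideanSpace ℝ (Fin N))} (hS : MeasurableSet S) (hSR : S ⊆ closedBall 0 R)
    (hK0 : 0 ≤ K) (hK : ∀ z ∈ S, K ≤ u z) :
    ∃ x₀ ∈ ball (0 : EuclideanSpace ℝ (Fin N)) (R + ε / 2), ∀ x ∈ ball x₀ (ε / 2),
      β * K * volume.real S ≤
        2 ^ (N + 1) * volume.real (ball (0 : EuclideanSpace ℝ (Fin N)) (R + ε / 2)) *
          (ρ + u x) := by
  obtain ⟨x₀, hx₀, hdense⟩ :=
    exists_measureReal_inter_ball_ge volume hS hSR (by positivity : 0 < R + ε / 2)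
  refine ⟨x₀, hx₀, fun x hx => ?_⟩
  have hsub : S ∩ ball x₀ (ε / 2) ⊆ ball x ε := fun z hz => mem_ball.mpr (by
    linarith [dist_triangle z x₀ x, mem_ball.mp hz.2, mem_ball'.mp hx])
  have hx' : x ∈ ball (0 : EuclideanSpace ℝ (Fin N)) (R + ε) := by
    rw [mem_ball] at hx₀ hx ⊢
    linarith [dist_triangle x x₀ 0]
  have hlow := mul_measureReal_le_integral_ball hu hpos (hS.inter measurableSet_ball) hsub
    (fun z hz => hK z hz.1)
  have hmvx : β * ∫ z in ball x ε, u z ≤ _ := hmv x hx'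
  rw [measureReal_ball_eq_pow_mul x hε] at hmvx
  rw [measureReal_ball_eq_pow_mul 0 (by positivity)] at hdense
  set v := volume.real (ball (0 : EuclideanSpace ℝ (Fin N)) 1)
  set V := volume.real (ball (0 : EuclideanSpace ℝ (Fin N)) (R + ε / 2))
  have hw : 0 < (ε / 2) ^ N * v := mul_pos (by positivity) (measureReal_ball_pos volume 0 one_pos)
  refine le_of_mul_le_mul_right ?_ hw
  calc β * K * volume.real S * ((ε / 2) ^ N * v)
      ≤ β * K * (volume.real (S ∩ ball x₀ (ε / 2)) * V) := by
        rw [mul_assoc]; exact mul_le_mul_of_nonneg_left hdense (by positivity)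
    _ = β * (K * volume.real (S ∩ ball x₀ (ε / 2))) * V := by ring
    _ ≤ 2 * (ε ^ N * v) * (ρ + u x) * V :=
        mul_le_mul_of_nonneg_right ((mul_le_mul_of_nonneg_left hlow hβ).trans hmvx)
          measureReal_nonneg
    _ = 2 ^ (N + 1) * V * (ρ + u x) * ((ε / 2) ^ N * v) := by
        rw [div_pow]; field_simp; ring

theorem lower_bound_of_measure_superlevel {R K m : ℝ} (hβ0 : 0 ≤ β) (hβ1 : β ≤ 1) (hε0 : 0 < ε)
    (hε1 : ε ≤ 1) (hρ : 0 ≤ ρ) (hu : LocallyIntegrable u) (hpos : ∀ x, 0 ≤ u x) (hR : 0 ≤ R)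
    (hmv : ∀ x ∈ ball (0 : EuclideanSpace ℝ (Fin N)) (R + 1), SuperMeanValueAt β ε ρ u x)
    {S : Set (EuclideanSpace ℝ (Fin N))} (hS : MeasurableSet S) (hSR : S ⊆ closedBall 0 R)
    (hK0 : 0 ≤ K) (hK : ∀ z ∈ S, K ≤ u z)
    (hm : 2 ^ (N + 1) * volume.real (ball (0 : EuclideanSpace ℝ (Fin N)) (R + 1)) * (m + ρ) ≤
      β * K * volume.real S)
    {n : ℕ} (hn : 2 * R + 1 ≤ n * (ε / 2)) {x : EuclideanSpace ℝ (Fin N)}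
    (hx : x ∈ closedBall 0 R) :
    (β / (2 * 4 ^ N)) ^ n * m - n * ρ ≤ u x := by
  obtain ⟨x₀, hx₀, hbase⟩ := exists_ball_lower_bound hβ0 hε0 hu hpos hR
    (fun y hy => hmv y (ball_subset_ball (by linarith) hy)) hS hSR hK0 hK
  have hm₀ : ∀ z ∈ ball x₀ (ε / 2), m ≤ u z := by
    intro z hz
    have hV : volume.real (ball (0 : EuclideanSpace ℝ (Fin N)) (R + ε / 2)) ≤
        volume.real (ball (0 : EuclideanSpace ℝ (Fin N)) (R + 1)) :=
      measureReal_mono (ball_subset_ball (by linarith)) measure_ball_lt_top.ne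
    have : 2 ^ (N + 1) * volume.real (ball (0 : EuclideanSpace ℝ (Fin N)) (R + 1)) * (m + ρ) ≤
        2 ^ (N + 1) * volume.real (ball (0 : EuclideanSpace ℝ (Fin N)) (R + 1)) * (ρ + u z) :=
      hm.trans ((hbase z hz).trans (by gcongr; linarith [hpos z]))
    linarith [le_of_mul_le_mul_left this
      (mul_pos (by positivity) (measureReal_ball_pos volume 0 (by linarith)))]
  have hdist : ‖x - x₀‖ ≤ n * (ε / 2) := by
    linarith [norm_sub_le x x₀, mem_closedBall_zero_iff.mp hx, mem_ball_zero_iff.mp hx₀]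
  exact lower_bound_propagates hβ0 hβ1 hε0 hρ hu hpos
    (fun y hy => hmv y (ball_subset_ball (by linarith) hy))
    hx₀ (closedBall_subset_ball (by linarith) hx) hdist hm₀

end Euclidean

theorem measure_estimate_second_general (N : ℕ) (Λ α β : ℝ) (hΛ : 1 ≤ Λ)
    (hβ : β ∈ Set.Ioc (0 : ℝ) 1) (hα : α = 1 - β)
    (ε₀ ρ : ℝ) (hε₀ : 0 < ε₀) (hε₀' : ε₀ < 1) (hρ : 0 < ρ) :
    ∃ c > (0 : ℝ),
      ∀ ε : ℝ, ε₀ / 2 ≤ ε → ε ≤ ε₀ →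
        ∀ u : EuclideanSpace ℝ (Fin N) → ℝ,
          Measurable u → (∃ K, ∀ x, |u x| ≤ K) →
          (∀ x ∈ cube (fun _ : Fin N => (0 : ℝ)) (10 * Real.sqrt N),
            Lminus Λ α β ε u x ≤ ρ) →
          (∀ x, 0 ≤ u x) →
          ∀ K : ℝ, 0 < K →
            ENNReal.ofReal (c / K) <
              volume ({x | K < u x} ∩ cube (fun _ : Fin N => (0 : ℝ)) 1) →
            ∀ x ∈ cube (fun _ : Fin N => (0 : ℝ)) 1, 1 < u x := by
  obtain ⟨hβ0, hβ1⟩ := hβ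
  set R := √N / 2
  obtain ⟨n, hn⟩ := exists_nat_ge (8 * (R + 1) / ε₀)
  set m₀ := (2 + n * ρ) / (β / (2 * 4 ^ N)) ^ n
  set V := volume.real (ball (0 : EuclideanSpace ℝ (Fin N)) (R + 1))
  have hV : 0 < V := measureReal_ball_pos volume 0 (by positivity)
  refine ⟨2 ^ (N + 1) * V * (m₀ + ρ) / β, by positivity, ?_⟩
  intro ε hε hε' u hu ⟨C, hC⟩ hL hpos K hK hS x hx
  have hQ : cube (fun _ : Fin N => (0 : ℝ)) 1 ⊆ closedBall 0 R := fun y hy =>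
    mem_closedBall_zero_iff.mpr ((norm_le_of_mem_cube zero_le_one hy).trans_eq (by ring))
  set S := {x | K < u x} ∩ cube (fun _ : Fin N => (0 : ℝ)) 1
  have hKS : 2 ^ (N + 1) * V * (m₀ + ρ) ≤ β * K * volume.real S := by
    have := (ENNReal.ofReal_lt_iff_lt_toReal (by positivity) (measure_ne_top_of_subset
      (Set.inter_subset_right.trans hQ) measure_closedBall_lt_top.ne)).mp hS
    rw [div_lt_iff₀ hK, div_lt_iff₀ hβ0, ← measureReal_def] at this
    linarith
  have hn' : 2 * R + 1 ≤ n * (ε / 2) := by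
    rw [div_le_iff₀ hε₀] at hn
    nlinarith
  have hloc : LocallyIntegrable u := (locallyIntegrable_const C).mono hu.aestronglyMeasurable
    (ae_of_all _ fun y => by simpa using (hC y).trans (le_abs_self C))
  have hchain := lower_bound_of_measure_superlevel hβ0.le hβ1 (by linarith) (by linarith) hρ.le
    hloc hpos (by positivity) (fun y hy => superMeanValueAt_of_Lminus_le (by linarith) hβ0.le hβ1
      hα (by linarith) (by linarith) hρ.le hu hC hpos (hL y (ball_subset_cube_ten_sqrt hy)))
    ((measurableSet_lt measurable_const hu).inter (isOpen_cube _ _).measurableSet)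
    (Set.inter_subset_right.trans hQ) hK.le (fun z hz => hz.1.le) hKS hn' (hQ hx)
  have : (β / (2 * 4 ^ N)) ^ n * m₀ = 2 + n * ρ := mul_div_cancel₀ _ (by positivity)
  linarith

/-- **Lemma `second`.** Let `0 < ε₀ < 1` and `ρ > 0`. There is a constant
`c > 0`, depending only on `N, Λ, α, β, ε₀, ρ`, such that: if `u` is bounded Borel measurable
with `L_ε^- u ≤ ρ` in `Q_{10√N}` and `u ≥ 0` in `ℝ^N`, for some `ε₀/2 ≤ ε ≤ ε₀`, and
`|{u > K} ∩ Q_1| > c/K` for some `K > 0`, then `u > 1` everywhere in `Q_1`. -/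
theorem measure_estimate_second (N : ℕ) (hN : 1 ≤ N) (Λ α β : ℝ) (hΛ : 1 ≤ Λ)
    (hβ : β ∈ Set.Ioc (0 : ℝ) 1) (hα : α = 1 - β)
    (ε₀ ρ : ℝ) (hε₀ : 0 < ε₀) (hε₀' : ε₀ < 1) (hρ : 0 < ρ) :
    ∃ c > (0 : ℝ),
      ∀ ε : ℝ, ε₀ / 2 ≤ ε → ε ≤ ε₀ →
        ∀ u : EuclideanSpace ℝ (Fin N) → ℝ,
          Measurable u → (∃ K, ∀ x, |u x| ≤ K) →
          (∀ x ∈ cube (fun _ : Fin N => (0 : ℝ)) (10 * Real.sqrt N),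
            Lminus Λ α β ε u x ≤ ρ) →
          (∀ x, 0 ≤ u x) →
          ∀ K : ℝ, 0 < K →
            ENNReal.ofReal (c / K) <
              volume ({x | K < u x} ∩ cube (fun _ : Fin N => (0 : ℝ)) 1) →
            ∀ x ∈ cube (fun _ : Fin N => (0 : ℝ)) 1, 1 < u x :=
  measure_estimate_second_general N Λ α β hΛ hβ hα ε₀ ρ hε₀ hε₀' hρ
end

section
/- Let u be a positive bounded function defined in B_3 ⊂ ℝ^n and suppose there are constants C ≥ 1, ρ ≥ 0, ε > 0, κ > 0, λ > 0 and γ > 0 such that, with δ = (2^{1+2λ}C)^{−1/γ}: (1) inf_{B_r(x)} u ≤ C (r^{−λ} inf_{B_1} u + ρ) for every x with |x| ≤ 2 and every r ∈ (κε, 1); (2) osc(u, B_r(x)) ≤ C (r/R)^γ (sup_{B_R(x)} u + R²ρ) for every x with |x| ≤ 2, every R ≤ 1 and every r with ε < r ≤ δR, where moreover εκ < δR. Then sup_{B_1} u ≤ C̃ (inf_{B_1} u + ρ + ε^{2λ} sup_{B_3} u), where C̃ = (2^{1+2λ}C)^{2λ/γ} · max(C·2^{2+2λ}, (2κ)^{2λ}).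 -/
/-!
Let `M k` be the supremum of `u` on `B_{2 - 2^{-k}}`. For `y` in that ball, `u y` is at most the
infimum plus the oscillation of `u` on `B_r(y)` with `r = δ 2^{-k-1}`: hypothesis (1) bounds the
infimum, and hypothesis (2) with `R = 2^{-k-1}` bounds the oscillation by `C δ^γ = 2^{-(1+2λ)}`
times `M (k+1) + ρ`, since `B_R(y) ⊆ B_{2 - 2^{-k-1}}`. Iterating while `r` stays above
`max(κ, 1) ε`, the factor `2^{-(1+2λ)k}` beats the growth `2^{λk}` of `r^{-λ}`, so the `inf_{B_1} u`
and `ρ` contributions form a geometric series. At the stopping index `N` one has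
`2^{-N} ≤ 2 max(κ, 1) ε / δ`, so the remainder `2^{-(1+2λ)N} sup_{B_3} u` is at most
`(2 max(κ, 1) ε / δ)^{2λ} sup_{B_3} u`, and `δ^{-2λ} = (2^{1+2λ} C)^{2λ/γ}`.
-/

open Metric Finset Filter Topology

theorem le_sum_pow_mul_add_pow_mul_of_le_add_mul {M a : ℕ → ℝ} {θ : ℝ} (hθ : 0 ≤ θ) {N : ℕ}
    (h : ∀ k < N, M k ≤ a k + θ * M (k + 1)) :
    M 0 ≤ ∑ k ∈ range N, θ ^ k * a k + θ ^ N * M N := by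
  induction N with
  | zero => simp
  | succ N ih =>
    have hN := mul_le_mul_of_nonneg_left (h N N.lt_succ_self) (pow_nonneg hθ N)
    rw [sum_range_succ, pow_succ]
    linarith [ih fun k hk => h k (Nat.lt_succ_of_lt hk)]

theorem le_two_mul_add_pow_mul_of_le_add_mul {M a : ℕ → ℝ} {θ G : ℝ} (hθ : 0 ≤ θ) (hG : 0 ≤ G)
    {N : ℕ} (h : ∀ k < N, M k ≤ a k + θ * M (k + 1))
    (ha : ∀ k < N, θ ^ k * a k ≤ (1 / 2) ^ k * G) :
    M 0 ≤ 2 * G + θ ^ N * M N := by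
  have hsum : ∑ k ∈ range N, θ ^ k * a k ≤ 2 * G := calc
    ∑ k ∈ range N, θ ^ k * a k ≤ (∑ k ∈ range N, (1 / 2 : ℝ) ^ k) * G := by
      rw [sum_mul]; exact sum_le_sum fun k hk => ha k (mem_range.1 hk)
    _ ≤ 2 * G := mul_le_mul_of_nonneg_right (sum_geometric_two_le N) hG
  linarith [le_sum_pow_mul_add_pow_mul_of_le_add_mul hθ h]

theorem exists_forall_lt_mul_half_pow_and_le (δ : ℝ) {b : ℝ} (hb : 0 < b) :
    ∃ N : ℕ, (∀ k < N, b < δ * (1 / 2) ^ (k + 1)) ∧ δ * (1 / 2) ^ (N + 1) ≤ b := by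
  have hlim : Tendsto (fun N : ℕ => δ * (1 / 2 : ℝ) ^ (N + 1)) atTop (𝓝 0) := by
    simpa using ((tendsto_pow_atTop_nhds_zero_of_lt_one (by norm_num : (0 : ℝ) ≤ 1 / 2)
      (by norm_num)).comp (tendsto_add_atTop_nat 1)).const_mul δ
  classical
  have hex := (hlim.eventually (ge_mem_nhds hb)).exists
  exact ⟨Nat.find hex, fun k hk => not_le.1 (Nat.find_min hex hk), Nat.find_spec hex⟩

theorem sSup_image_ball_le_add_mul_of_sInf_le_of_osc_le {X : Type*} [PseudoMetricSpace X]
    {u : X → ℝ} {c : X} {s t r R A θ ρ : ℝ} (hbdd : BddAbove (u '' ball c t)) (hs : 0 < s)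
    (hr : 0 < r) (hrR : r ≤ R) (hst : s + R ≤ t) (hθ : 0 ≤ θ)
    (hinf : ∀ y ∈ ball c s, sInf (u '' ball y r) ≤ A)
    (hosc : ∀ y ∈ ball c s,
      sSup (u '' ball y r) - sInf (u '' ball y r) ≤ θ * (sSup (u '' ball y R) + ρ)) :
    sSup (u '' ball c s) ≤ A + θ * (sSup (u '' ball c t) + ρ) := by
  refine csSup_le ((nonempty_ball.2 hs).image u) ?_
  rintro _ ⟨y, hy, rfl⟩
  have hyR : ball y R ⊆ ball c t := ball_subset_ball' (by linarith [mem_ball.1 hy])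
  have hyr : u y ≤ sSup (u '' ball y r) :=
    le_csSup (hbdd.mono (Set.image_mono ((ball_subset_ball hrR).trans hyR)))
      (Set.mem_image_of_mem u (mem_ball_self hr))
  have hR : sSup (u '' ball y R) ≤ sSup (u '' ball c t) :=
    csSup_le_csSup hbdd ((nonempty_ball.2 (hr.trans_le hrR)).image u) (Set.image_mono hyR)
  linarith [hinf y hy, hosc y hy, mul_le_mul_of_nonneg_left (add_le_add_right hR ρ) hθ]

theorem sSup_ball_two_sub_two_mul_le {E : Type*} [SeminormedAddCommGroup E] {u : E → ℝ}
    {C ρ ε κ lam γ δ m R : ℝ} (hC : 0 ≤ C) (hρ : 0 ≤ ρ) (hδ : 0 < δ) (hδ1 : δ ≤ 1)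
    (hR : 0 < R) (hR2 : R ≤ 1 / 2) (hε : ε < δ * R) (hκ : κ * ε < δ * R)
    (hbdd : BddAbove (u '' ball 0 3))
    (h1 : ∀ x : E, ‖x‖ ≤ 2 → ∀ r : ℝ, κ * ε < r → r < 1 →
      sInf (u '' ball x r) ≤ C * (r ^ (-lam) * m + ρ))
    (h2 : ∀ x : E, ‖x‖ ≤ 2 → ∀ R : ℝ, R ≤ 1 → ∀ r : ℝ, ε < r → r ≤ δ * R → ε * κ < δ * R →
      sSup (u '' ball x r) - sInf (u '' ball x r) ≤
        C * (r / R) ^ γ * (sSup (u '' ball x R) + R ^ 2 * ρ)) :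
    sSup (u '' ball 0 (2 - 2 * R)) ≤
      C * ((δ * R) ^ (-lam) * m + ρ) + C * δ ^ γ * (sSup (u '' ball 0 (2 - R)) + ρ) := by
  have hnorm : ∀ y ∈ ball (0 : E) (2 - 2 * R), ‖y‖ ≤ 2 := fun y hy => by
    rw [mem_ball_zero_iff] at hy; linarith
  refine sSup_image_ball_le_add_mul_of_sInf_le_of_osc_le
    (hbdd.mono (Set.image_mono (ball_subset_ball (by linarith)))) (by linarith) (mul_pos hδ hR)
    (mul_le_of_le_one_left hR.le hδ1) (by linarith) (by positivity)
    (fun y hy => h1 y (hnorm y hy) _ hκ (by nlinarith)) fun y hy => ?_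
  calc _ ≤ C * (δ * R / R) ^ γ * (sSup (u '' ball y R) + R ^ 2 * ρ) :=
        h2 y (hnorm y hy) R (by linarith) _ hε le_rfl (by linarith [mul_comm ε κ])
    _ ≤ C * δ ^ γ * (sSup (u '' ball y R) + ρ) := by
        rw [mul_div_cancel_right₀ δ hR.ne']
        gcongr
        exact mul_le_of_le_one_left hρ (by nlinarith)

theorem rpow_one_add_two_mul_mul_div_two_rpow_neg_le {s lam : ℝ} (hs : 0 < s) (hs1 : s ≤ 1)
    (hlam : 0 ≤ lam) : s ^ (1 + 2 * lam) * (s / 2) ^ (-lam) ≤ 2 ^ lam * s := by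
  rw [Real.div_rpow hs.le zero_le_two, Real.rpow_neg zero_le_two, div_inv_eq_mul, ← mul_assoc,
    ← Real.rpow_add hs, mul_comm]
  gcongr
  calc s ^ (1 + 2 * lam + -lam) ≤ s ^ (1 : ℝ) :=
        Real.rpow_le_rpow_of_exponent_ge hs hs1 (by linarith)
    _ = s := Real.rpow_one s

theorem half_rpow_pow_eq {p : ℝ} (k : ℕ) : ((1 / 2 : ℝ) ^ p) ^ k = ((1 / 2 : ℝ) ^ k) ^ p :=
  Real.rpow_pow_comm (by norm_num) p k

theorem half_rpow_pow_mul_le {C δ lam m ρ : ℝ} (hC : 1 ≤ C) (hδ : 0 < δ) (hlam : 0 ≤ lam)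
    (hm : 0 ≤ m) (hρ : 0 ≤ ρ) (k : ℕ) :
    ((1 / 2 : ℝ) ^ (1 + 2 * lam)) ^ k *
        (C * ((δ * (1 / 2) ^ (k + 1)) ^ (-lam) * m + ρ) + (1 / 2 : ℝ) ^ (1 + 2 * lam) * ρ) ≤
      (1 / 2) ^ k * (2 * 2 ^ lam * C * (δ ^ (-lam) * m + ρ)) := by
  have hR : (1 / 2 : ℝ) ^ (k + 1) = (1 / 2) ^ k / 2 := by rw [pow_succ]; ring
  rw [half_rpow_pow_eq, hR, Real.mul_rpow hδ.le (by positivity)]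
  set s : ℝ := (1 / 2) ^ k
  have hs : 0 < s := by positivity
  have hs1 : s ≤ 1 := pow_le_one₀ (by norm_num) (by norm_num)
  have hdecay : s ^ (1 + 2 * lam) ≤ s := by
    simpa using Real.rpow_le_rpow_of_exponent_ge hs hs1 (by linarith : (1 : ℝ) ≤ 1 + 2 * lam)
  have hCθ : C + (1 / 2 : ℝ) ^ (1 + 2 * lam) ≤ 2 * 2 ^ lam * C := by
    have hθ : (1 / 2 : ℝ) ^ (1 + 2 * lam) ≤ 1 :=
      Real.rpow_le_one (by norm_num) (by norm_num) (by positivity)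
    nlinarith [Real.one_le_rpow one_le_two hlam]
  have hm_term := mul_le_mul_of_nonneg_left
    (rpow_one_add_two_mul_mul_div_two_rpow_neg_le hs hs1 hlam)
    (by positivity : 0 ≤ C * δ ^ (-lam) * m)
  have hρ_term := mul_le_mul hdecay (mul_le_mul_of_nonneg_right hCθ hρ) (by positivity) hs.le
  have hm_nonneg : 0 ≤ s * 2 ^ lam * C * δ ^ (-lam) * m := by positivity
  linarith

theorem rpow_one_add_two_mul_le_of_mul_div_two_le {s δ b lam : ℝ} (hs : 0 < s) (hs1 : s ≤ 1)
    (hδ : 0 < δ) (hlam : 0 ≤ lam) (hsb : δ * (s / 2) ≤ b) :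
    s ^ (1 + 2 * lam) ≤ (2 * b) ^ (2 * lam) * δ ^ (-(2 * lam)) := by
  have hb : 0 ≤ b := (by positivity : 0 ≤ δ * (s / 2)).trans hsb
  have hs2b : s ≤ 2 * b / δ := by rw [le_div_iff₀ hδ]; linarith
  calc s ^ (1 + 2 * lam) ≤ s ^ (2 * lam) := Real.rpow_le_rpow_of_exponent_ge hs hs1 (by linarith)
    _ ≤ (2 * b / δ) ^ (2 * lam) := by gcongr
    _ = (2 * b) ^ (2 * lam) * δ ^ (-(2 * lam)) := by
        rw [Real.div_rpow (by positivity) hδ.le, Real.rpow_neg hδ.le, div_eq_mul_inv]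

theorem rpow_neg_one_div_rpow {X : ℝ} (hX : 0 ≤ X) (γ p : ℝ) :
    (X ^ (-(1 / γ))) ^ p = X ^ (-(p / γ)) := by
  rw [← Real.rpow_mul hX]; ring_nf

theorem mul_rpow_neg_one_div_rpow_of_two_rpow_mul {C p γ : ℝ} (hC : 0 < C) (hγ : γ ≠ 0) :
    C * ((2 ^ p * C) ^ (-(1 / γ))) ^ γ = (1 / 2) ^ p := by
  rw [rpow_neg_one_div_rpow (by positivity), div_self hγ, Real.rpow_neg_one, one_div,
    Real.inv_rpow zero_le_two]
  field_simp

theorem four_mul_two_rpow_mul_le_max {C κ lam : ℝ} (hC : 0 ≤ C) (hlam : 0 ≤ lam) :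
    4 * 2 ^ lam * C ≤ max (C * 2 ^ (2 + 2 * lam)) ((2 * κ) ^ (2 * lam)) := by
  refine le_max_of_le_left ?_
  rw [mul_comm C, show (4 : ℝ) = 2 ^ (2 : ℝ) by norm_num, ← Real.rpow_add two_pos]
  exact mul_le_mul_of_nonneg_right (Real.rpow_le_rpow_of_exponent_le one_le_two (by linarith)) hC

theorem two_mul_max_one_rpow_le_max {C κ lam : ℝ} (hC : 1 ≤ C) :
    (2 * max κ 1) ^ (2 * lam) ≤ max (C * 2 ^ (2 + 2 * lam)) ((2 * κ) ^ (2 * lam)) := by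
  rcases le_total κ 1 with hκ | hκ
  · refine le_max_of_le_left ?_
    rw [max_eq_right hκ, mul_one]
    calc (2 : ℝ) ^ (2 * lam) ≤ 2 ^ (2 + 2 * lam) := by gcongr <;> norm_num
      _ ≤ C * 2 ^ (2 + 2 * lam) := le_mul_of_one_le_left (by positivity) hC
  · rw [max_eq_left hκ]; exact le_max_right _ _

theorem sSup_ball_one_le_add_half_rpow_pow_mul {E : Type*} [SeminormedAddCommGroup E]
    {u : E → ℝ} {C ρ ε κ lam γ δ m : ℝ} (hC : 1 ≤ C) (hρ : 0 ≤ ρ) (hlam : 0 ≤ lam) (hm : 0 ≤ m)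
    (hδ : 0 < δ) (hδ1 : δ ≤ 1) (hCδ : C * δ ^ γ = (1 / 2) ^ (1 + 2 * lam))
    (hbdd : BddAbove (u '' ball 0 3))
    (h1 : ∀ x : E, ‖x‖ ≤ 2 → ∀ r : ℝ, κ * ε < r → r < 1 →
      sInf (u '' ball x r) ≤ C * (r ^ (-lam) * m + ρ))
    (h2 : ∀ x : E, ‖x‖ ≤ 2 → ∀ R : ℝ, R ≤ 1 → ∀ r : ℝ, ε < r → r ≤ δ * R → ε * κ < δ * R →
      sSup (u '' ball x r) - sInf (u '' ball x r) ≤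
        C * (r / R) ^ γ * (sSup (u '' ball x R) + R ^ 2 * ρ))
    {N : ℕ} (hNε : ∀ k < N, ε < δ * (1 / 2) ^ (k + 1))
    (hNκ : ∀ k < N, κ * ε < δ * (1 / 2) ^ (k + 1)) :
    sSup (u '' ball 0 1) ≤ 4 * 2 ^ lam * C * (δ ^ (-lam) * m + ρ) +
      ((1 / 2) ^ (1 + 2 * lam)) ^ N * sSup (u '' ball 0 3) := by
  set θ : ℝ := (1 / 2) ^ (1 + 2 * lam)
  set M : ℕ → ℝ := fun k => sSup (u '' ball (0 : E) (2 - (1 / 2) ^ k))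
  have hiter : M 0 ≤ 2 * (2 * 2 ^ lam * C * (δ ^ (-lam) * m + ρ)) + θ ^ N * M N := by
    refine le_two_mul_add_pow_mul_of_le_add_mul (by positivity) (by positivity) (fun k hk => ?_)
      fun k _ => half_rpow_pow_mul_le hC hδ hlam hm hρ k
    have hR2 : (1 / 2 : ℝ) ^ (k + 1) ≤ 1 / 2 :=
      pow_le_of_le_one (by norm_num) (by norm_num) k.succ_ne_zero
    have hstep := sSup_ball_two_sub_two_mul_le (by linarith) hρ hδ hδ1 (by positivity) hR2
      (hNε k hk) (hNκ k hk) hbdd h1 h2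
    rw [hCδ, show 2 - 2 * (1 / 2 : ℝ) ^ (k + 1) = 2 - (1 / 2) ^ k by ring] at hstep
    linarith
  have hMN : M N ≤ sSup (u '' ball 0 3) := by
    have hpow : (1 / 2 : ℝ) ^ N ≤ 1 := pow_le_one₀ (by norm_num) (by norm_num)
    refine csSup_le_csSup hbdd ((nonempty_ball.2 (by linarith)).image u)
      (Set.image_mono (ball_subset_ball ?_))
    linarith [pow_nonneg (by norm_num : (0 : ℝ) ≤ 1 / 2) N]
  have hM0 : M 0 = sSup (u '' ball 0 1) := by norm_num [M]
  rw [← hM0]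
  linarith [mul_le_mul_of_nonneg_left hMN (by positivity : 0 ≤ θ ^ N)]

theorem sSup_ball_one_le_of_sInf_le_of_osc_le {E : Type*} [SeminormedAddCommGroup E]
    {u : E → ℝ} {C ρ ε κ lam γ δ m : ℝ} (hC : 1 ≤ C) (hρ : 0 ≤ ρ) (hε : 0 < ε) (hlam : 0 ≤ lam)
    (hm : 0 ≤ m) (hδ : 0 < δ) (hδ1 : δ ≤ 1) (hCδ : C * δ ^ γ = (1 / 2) ^ (1 + 2 * lam))
    (hnonneg : ∀ x ∈ ball (0 : E) 3, 0 ≤ u x) (hbdd : BddAbove (u '' ball 0 3))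
    (h1 : ∀ x : E, ‖x‖ ≤ 2 → ∀ r : ℝ, κ * ε < r → r < 1 →
      sInf (u '' ball x r) ≤ C * (r ^ (-lam) * m + ρ))
    (h2 : ∀ x : E, ‖x‖ ≤ 2 → ∀ R : ℝ, R ≤ 1 → ∀ r : ℝ, ε < r → r ≤ δ * R → ε * κ < δ * R →
      sSup (u '' ball x r) - sInf (u '' ball x r) ≤
        C * (r / R) ^ γ * (sSup (u '' ball x R) + R ^ 2 * ρ)) :
    sSup (u '' ball 0 1) ≤ 4 * 2 ^ lam * C * (δ ^ (-lam) * m + ρ) +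
      (2 * max κ 1 * ε) ^ (2 * lam) * δ ^ (-(2 * lam)) * sSup (u '' ball 0 3) := by
  obtain ⟨N, hfar, hnear⟩ :=
    exists_forall_lt_mul_half_pow_and_le δ (by positivity : 0 < max κ 1 * ε)
  have hiter := sSup_ball_one_le_add_half_rpow_pow_mul hC hρ hlam hm hδ hδ1 hCδ hbdd h1 h2
    (fun k hk => (le_mul_of_one_le_left hε.le (le_max_right κ 1)).trans_lt (hfar k hk))
    (fun k hk => (mul_le_mul_of_nonneg_right (le_max_left κ 1) hε.le).trans_lt (hfar k hk))
  have htail : ((1 / 2 : ℝ) ^ (1 + 2 * lam)) ^ N ≤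
      (2 * max κ 1 * ε) ^ (2 * lam) * δ ^ (-(2 * lam)) := by
    rw [half_rpow_pow_eq, mul_assoc]
    exact rpow_one_add_two_mul_le_of_mul_div_two_le (by positivity)
      (pow_le_one₀ (by norm_num) (by norm_num)) hδ hlam (by convert hnear using 1; ring)
  have hS : 0 ≤ sSup (u '' ball (0 : E) 3) :=
    Real.sSup_nonneg fun _ ⟨y, hy, hyu⟩ => hyu ▸ hnonneg y hy
  linarith [mul_le_mul_of_nonneg_right htail hS]

theorem harnack_sufficient_conditions_general (n : ℕ)
    (u : EuclideanSpace ℝ (Fin n) → ℝ)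
    (C ρ ε κ lam γ : ℝ)
    (hC : 1 ≤ C) (hρ : 0 ≤ ρ) (hε : 0 < ε) (hlam : 0 < lam) (hγ : 0 < γ)
    (hpos : ∀ x ∈ ball (0 : EuclideanSpace ℝ (Fin n)) 3, 0 < u x)
    (hbdd : BddAbove (u '' ball (0 : EuclideanSpace ℝ (Fin n)) 3))
    (h1 : ∀ x : EuclideanSpace ℝ (Fin n), ‖x‖ ≤ 2 →
      ∀ r : ℝ, κ * ε < r → r < 1 →
        sInf (u '' ball x r) ≤
          C * (r ^ (-lam) * sInf (u '' ball (0 : EuclideanSpace ℝ (Fin n)) 1) + ρ))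
    (h2 : ∀ x : EuclideanSpace ℝ (Fin n), ‖x‖ ≤ 2 →
      ∀ R : ℝ, R ≤ 1 →
        ∀ r : ℝ, ε < r → r ≤ ((2 : ℝ) ^ (1 + 2 * lam) * C) ^ (-(1 / γ)) * R →
          ε * κ < ((2 : ℝ) ^ (1 + 2 * lam) * C) ^ (-(1 / γ)) * R →
          sSup (u '' ball x r) - sInf (u '' ball x r) ≤
            C * (r / R) ^ γ * (sSup (u '' ball x R) + R ^ 2 * ρ)) :
    sSup (u '' ball (0 : EuclideanSpace ℝ (Fin n)) 1) ≤
      ((2 : ℝ) ^ (1 + 2 * lam) * C) ^ (2 * lam / γ) *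
        max (C * 2 ^ (2 + 2 * lam)) ((2 * κ) ^ (2 * lam)) *
        (sInf (u '' ball (0 : EuclideanSpace ℝ (Fin n)) 1) + ρ +
          ε ^ (2 * lam) * sSup (u '' ball (0 : EuclideanSpace ℝ (Fin n)) 3)) := by
  set X : ℝ := 2 ^ (1 + 2 * lam) * C
  set K : ℝ := max (C * 2 ^ (2 + 2 * lam)) ((2 * κ) ^ (2 * lam))
  set m : ℝ := sInf (u '' ball (0 : EuclideanSpace ℝ (Fin n)) 1)
  set S : ℝ := sSup (u '' ball (0 : EuclideanSpace ℝ (Fin n)) 3)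
  have hX1 : 1 ≤ X :=
    one_le_mul_of_one_le_of_one_le (Real.one_le_rpow one_le_two (by positivity)) hC
  have hnonneg : ∀ x ∈ ball (0 : EuclideanSpace ℝ (Fin n)) 3, 0 ≤ u x := fun x hx => (hpos x hx).le
  have hm : 0 ≤ m :=
    Real.sInf_nonneg fun _ ⟨y, hy, hyu⟩ => hyu ▸ hnonneg y (ball_subset_ball (by norm_num) hy)
  have hS : 0 ≤ S := Real.sSup_nonneg fun _ ⟨y, hy, hyu⟩ => hyu ▸ hnonneg y hy
  have hharnack := sSup_ball_one_le_of_sInf_le_of_osc_le hC hρ hε hlam.le hm (by positivity)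
    (Real.rpow_le_one_of_one_le_of_nonpos hX1 (by simp [hγ.le]))
    (mul_rpow_neg_one_div_rpow_of_two_rpow_mul (by positivity) hγ.ne') hnonneg hbdd h1 h2
  rw [rpow_neg_one_div_rpow (by positivity), rpow_neg_one_div_rpow (by positivity), neg_div,
    neg_neg, neg_div, neg_neg, Real.mul_rpow (by positivity) hε.le] at hharnack
  have hXpow : X ^ (lam / γ) ≤ X ^ (2 * lam / γ) :=
    Real.rpow_le_rpow_of_exponent_le hX1 (by gcongr; linarith)
  have hD1 : 1 ≤ X ^ (2 * lam / γ) := Real.one_le_rpow hX1 (by positivity)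
  have hcoef : 4 * 2 ^ lam * C * (X ^ (lam / γ) * m + ρ) ≤ K * (X ^ (2 * lam / γ) * (m + ρ)) :=
    mul_le_mul (four_mul_two_rpow_mul_le_max (by positivity) hlam.le)
      (by nlinarith [mul_le_mul_of_nonneg_right hXpow hm]) (by positivity) (by positivity)
  have htail := mul_le_mul_of_nonneg_right (two_mul_max_one_rpow_le_max (κ := κ) (lam := lam) hC)
    (by positivity : 0 ≤ ε ^ (2 * lam) * X ^ (2 * lam / γ) * S)
  linarith

/-- Let `u` be a positive bounded function in `B_3 ⊂ ℝ^n` and suppose there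
are `C ≥ 1`, `ρ ≥ 0`, `ε > 0`, `κ > 0`, `λ > 0`, `γ > 0` such that, with
`δ = (2^{1+2λ}C)^{−1/γ}`:
(1) `inf_{B_r(x)} u ≤ C(r^{−λ} inf_{B_1} u + ρ)` for every `|x| ≤ 2` and `r ∈ (κε, 1)`;
(2) `osc(u, B_r(x)) ≤ C (r/R)^γ (sup_{B_R(x)} u + R²ρ)` for every `|x| ≤ 2`, `R ≤ 1` and
`ε < r ≤ δR` with `εκ < δR`.
Then `sup_{B_1} u ≤ C̃ (inf_{B_1} u + ρ + ε^{2λ} sup_{B_3} u)` with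
`C̃ = (2^{1+2λ}C)^{2λ/γ} max(C·2^{2+2λ}, (2κ)^{2λ})`. -/
theorem harnack_sufficient_conditions (n : ℕ) (hn : 1 ≤ n)
    (u : EuclideanSpace ℝ (Fin n) → ℝ)
    (C ρ ε κ lam γ : ℝ)
    (hC : 1 ≤ C) (hρ : 0 ≤ ρ) (hε : 0 < ε) (hκ : 0 < κ) (hlam : 0 < lam) (hγ : 0 < γ)
    (hpos : ∀ x ∈ ball (0 : EuclideanSpace ℝ (Fin n)) 3, 0 < u x)
    (hbdd : BddAbove (u '' ball (0 : EuclideanSpace ℝ (Fin n)) 3))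
    (h1 : ∀ x : EuclideanSpace ℝ (Fin n), ‖x‖ ≤ 2 →
      ∀ r : ℝ, κ * ε < r → r < 1 →
        sInf (u '' ball x r) ≤
          C * (r ^ (-lam) * sInf (u '' ball (0 : EuclideanSpace ℝ (Fin n)) 1) + ρ))
    (h2 : ∀ x : EuclideanSpace ℝ (Fin n), ‖x‖ ≤ 2 →
      ∀ R : ℝ, R ≤ 1 →
        ∀ r : ℝ, ε < r → r ≤ ((2 : ℝ) ^ (1 + 2 * lam) * C) ^ (-(1 / γ)) * R →
          ε * κ < ((2 : ℝ) ^ (1 + 2 * lam) * C) ^ (-(1 / γ)) * R →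
          sSup (u '' ball x r) - sInf (u '' ball x r) ≤
            C * (r / R) ^ γ * (sSup (u '' ball x R) + R ^ 2 * ρ)) :
    sSup (u '' ball (0 : EuclideanSpace ℝ (Fin n)) 1) ≤
      ((2 : ℝ) ^ (1 + 2 * lam) * C) ^ (2 * lam / γ) *
        max (C * 2 ^ (2 + 2 * lam)) ((2 * κ) ^ (2 * lam)) *
        (sInf (u '' ball (0 : EuclideanSpace ℝ (Fin n)) 1) + ρ +
          ε ^ (2 * lam) * sSup (u '' ball (0 : EuclideanSpace ℝ (Fin n)) 3)) :=
  harnack_sufficient_conditions_general n u C ρ ε κ lam γ hC hρ hε hlam hγ hpos hbdd h1 h2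
end

section
/- Failure of the classical Harnack inequality: let N ≥ 1, α ∈ (0,1), β = 1 − α, Λ = 1 and ε ∈ (0,1). For every M > 0 there exist a family ν assigning to each x ∈ ℝ^N a symmetric probability measure ν_x supported in the closed unit ball (with x ↦ ∫ u(x+z) dν_x(z) Borel measurable for every bounded Borel measurable u) and a bounded Borel measurable function u : ℝ^N → ℝ with u ≥ 1 on ℝ^N, such that u satisfies the DPP u(x) = α ∫ u(x+εz) dν_x(z) + β ⨍_{B_ε(x)} u(y) dy for every x ∈ B_2, inf_{B_1} u = 1, and sup_{B_1} u ≥ M. -/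
open MeasureTheory Metric

open scoped ENNReal

/-!
Fix a unit vector `e`, let every `ν_x` be the symmetric two-point measure on `±e`, and let `u` be
`1` off the discrete line `ℤ • (ε • e)` and `u (k • ε • e) = g k` on it. The line is Lebesgue-null,
so every ball average of `u` is `1`; it is invariant under translation by `±ε • e`, so the DPP
reads `1 = α + (1 - α)` off the line and `g k = α (g (k + 1) + g (k - 1)) / 2 + (1 - α)` on it.
This recurrence is solved by `g k = 1 + M q ^ k` when `α (q ^ 2 + 1) = 2 q`, `q ≥ 1`; capping the
exponent at some `K` with `K ε > 2` keeps `u` bounded without affecting the DPP in `B_2`. Then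
`u 0 = 1 + M`, while `u ((ε / 2) • e) = 1`.
-/

section SymmDirac

variable {X : Type*} [MeasurableSpace X]

noncomputable def symmDirac [Neg X] (e : X) : Measure X :=
  (2⁻¹ : ℝ≥0∞) • (Measure.dirac e + Measure.dirac (-e))

instance [Neg X] (e : X) : IsProbabilityMeasure (symmDirac e) := by
  constructor
  simp [symmDirac, ENNReal.inv_two_add_inv_two]

instance [InvolutiveNeg X] [MeasurableNeg X] (e : X) : (symmDirac e).IsNegInvariant := by
  constructor
  rw [Measure.neg, symmDirac, Measure.map_smul, Measure.map_add _ _ measurable_neg,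
    Measure.map_dirac' measurable_neg, Measure.map_dirac' measurable_neg, neg_neg, add_comm]

variable [MeasurableSingletonClass X]

lemma integral_symmDirac [Neg X] (e : X) (f : X → ℝ) :
    ∫ z, f z ∂symmDirac e = (f e + f (-e)) / 2 := by
  rw [symmDirac, integral_smul_measure, integral_add_measure (integrable_dirac enorm_lt_top)
    (integrable_dirac enorm_lt_top), integral_dirac, integral_dirac]
  simp only [ENNReal.toReal_inv, ENNReal.toReal_ofNat, smul_eq_mul]
  ring

lemma symmDirac_apply_eq_zero [Neg X] {e : X} {s : Set X} (he : e ∉ s) (hne : -e ∉ s) :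
    symmDirac e s = 0 := by
  simp [symmDirac, Measure.dirac_apply, he, hne]

end SymmDirac

section LatticeExtend

variable {X : Type*} [AddCommGroup X] {v x : X} {g : ℤ → ℝ}

lemma zsmul_left_injective [Module ℝ X] (hv : v ≠ 0) : Function.Injective fun k : ℤ => k • v :=
  fun j k h => Int.cast_injective (α := ℝ) <|
    smul_left_injective ℝ hv (by simpa only [Int.cast_smul_eq_zsmul] using h)

noncomputable def latticeExtend (v : X) (g : ℤ → ℝ) : X → ℝ :=
  Function.extend (fun k : ℤ => k • v) g 1

lemma latticeExtend_of_notMem (hx : x ∉ Set.range fun k : ℤ => k • v) :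
    latticeExtend v g x = 1 :=
  Function.extend_apply' _ _ _ hx

lemma latticeExtend_mem_insert_range (v : X) (g : ℤ → ℝ) (x : X) :
    latticeExtend v g x ∈ insert 1 (Set.range g) := by
  classical
  rw [latticeExtend, Function.extend_def]
  split_ifs
  exacts [Or.inr ⟨_, rfl⟩, Or.inl rfl]

lemma one_le_latticeExtend (hg : ∀ k, 1 ≤ g k) (x : X) : 1 ≤ latticeExtend v g x := by
  rcases latticeExtend_mem_insert_range v g x with h | ⟨k, h⟩
  · exact h.ge
  · exact h ▸ hg k

lemma latticeExtend_le {C : ℝ} (hC : 1 ≤ C) (hg : ∀ k, g k ≤ C) (x : X) :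
    latticeExtend v g x ≤ C := by
  rcases latticeExtend_mem_insert_range v g x with h | ⟨k, h⟩
  · exact h ▸ hC
  · exact h ▸ hg k

lemma abs_latticeExtend_le {C : ℝ} (hg₁ : ∀ k, 1 ≤ g k) (hgC : ∀ k, g k ≤ C) (x : X) :
    |latticeExtend v g x| ≤ C :=
  abs_le.2 ⟨by linarith [one_le_latticeExtend (v := v) hg₁ x, hg₁ 0, hgC 0],
    latticeExtend_le ((hg₁ 0).trans (hgC 0)) hgC x⟩

lemma setOf_latticeExtend_ne_one_countable (v : X) (g : ℤ → ℝ) :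
    {x | latticeExtend v g x ≠ 1}.Countable :=
  (Set.countable_range _).mono fun _ hx => not_imp_comm.1 latticeExtend_of_notMem hx

lemma measurable_latticeExtend [MeasurableSpace X] [MeasurableSingletonClass X] (v : X)
    (g : ℤ → ℝ) : Measurable (latticeExtend v g) :=
  measurable_const.measurable_of_countable_ne (f := fun _ => 1) <| by
    simpa only [ne_comm] using setOf_latticeExtend_ne_one_countable v g

lemma latticeExtend_ae_eq_one [MeasurableSpace X] (μ : Measure X) [NullSingletonClass μ]
    (v : X) (g : ℤ → ℝ) : latticeExtend v g =ᵐ[μ] 1 :=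
  (setOf_latticeExtend_ne_one_countable v g).measure_zero μ

variable [Module ℝ X]

lemma latticeExtend_zsmul (hv : v ≠ 0) (k : ℤ) : latticeExtend v g (k • v) = g k :=
  (zsmul_left_injective hv).extend_apply g 1 k

lemma latticeExtend_half_smul (hv : v ≠ 0) : latticeExtend v g ((2⁻¹ : ℝ) • v) = 1 := by
  refine latticeExtend_of_notMem ?_
  rintro ⟨k, hk⟩
  have hk₂ : ((2 * k : ℤ) : ℝ) = 1 := by
    rw [Int.cast_mul, smul_left_injective ℝ hv ((Int.cast_smul_eq_zsmul ℝ k v).trans hk)]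
    norm_num
  have : 2 * k = 1 := by exact_mod_cast hk₂
  omega

lemma latticeExtend_eq_of_recurrence (hv : v ≠ 0) {α : ℝ}
    (hg : ∀ k : ℤ, k • v = x → g k = α * ((g (k + 1) + g (k - 1)) / 2) + (1 - α)) :
    latticeExtend v g x =
      α * ((latticeExtend v g (x + v) + latticeExtend v g (x - v)) / 2) + (1 - α) := by
  by_cases hx : x ∈ Set.range fun k : ℤ => k • v
  · obtain ⟨k, rfl⟩ := hx
    rw [← add_one_zsmul, sub_eq_add_neg, ← sub_one_zsmul, latticeExtend_zsmul hv,
      latticeExtend_zsmul hv, latticeExtend_zsmul hv]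
    exact hg k rfl
  · have hx_add : ∀ w ∈ Set.range fun k : ℤ => k • v, x + w ∉ Set.range fun k : ℤ => k • v := by
      rintro w ⟨j, rfl⟩ ⟨k, hk⟩
      refine hx ⟨k - j, show (k - j) • v = x from ?_⟩
      rw [sub_zsmul, ← sub_eq_add_neg]
      exact sub_eq_of_eq_add hk
    rw [latticeExtend_of_notMem hx, latticeExtend_of_notMem (hx_add v ⟨1, one_zsmul v⟩),
      sub_eq_add_neg, latticeExtend_of_notMem (hx_add (-v) ⟨-1, neg_one_zsmul v⟩)]
    ring

end LatticeExtend

section CappedGeom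

lemma exists_one_le_mul_sq_add_one_eq {α : ℝ} (hα₀ : 0 < α) (hα₁ : α ≤ 1) :
    ∃ q : ℝ, 1 ≤ q ∧ α * (q ^ 2 + 1) = 2 * q := by
  have hs : Real.sqrt (1 - α ^ 2) ^ 2 = 1 - α ^ 2 := Real.sq_sqrt (by nlinarith)
  refine ⟨(1 + Real.sqrt (1 - α ^ 2)) / α, ?_, ?_⟩
  · rw [le_div_iff₀ hα₀]
    linarith [Real.sqrt_nonneg (1 - α ^ 2)]
  · field_simp
    linear_combination hs

noncomputable def cappedGeom (M q : ℝ) (K k : ℤ) : ℝ := 1 + M * q ^ min k K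

variable {α M q : ℝ}

lemma one_le_cappedGeom (hM : 0 ≤ M) (hq : 0 < q) (K k : ℤ) : 1 ≤ cappedGeom M q K k := by
  have := zpow_pos hq (min k K)
  unfold cappedGeom
  nlinarith

lemma cappedGeom_le (hM : 0 ≤ M) (hq : 1 ≤ q) (K k : ℤ) :
    cappedGeom M q K k ≤ 1 + M * q ^ K := by
  unfold cappedGeom
  gcongr
  exact min_le_right k K

lemma cappedGeom_recurrence (hq : α * (q ^ 2 + 1) = 2 * q) (hq₀ : q ≠ 0) {K k : ℤ}
    (hk : k < K) :
    cappedGeom M q K k =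
      α * ((cappedGeom M q K (k + 1) + cappedGeom M q K (k - 1)) / 2) + (1 - α) := by
  simp only [cappedGeom, min_eq_left hk.le, min_eq_left (by omega : k + 1 ≤ K),
    min_eq_left (by omega : k - 1 ≤ K), zpow_add₀ hq₀, zpow_sub₀ hq₀, zpow_one]
  field_simp
  linear_combination -M * q ^ k * hq

end CappedGeom

section DPP

variable {X : Type*} [NormedAddCommGroup X] [NormedSpace ℝ X]

lemma csInf_image_ball_latticeExtend {v : X} {g : ℤ → ℝ} {r : ℝ} (hv : v ≠ 0)
    (hg₁ : ∀ k, 1 ≤ g k) (hr : ‖v‖ < 2 * r) : sInf (latticeExtend v g '' ball 0 r) = 1 := by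
  refine IsLeast.csInf_eq ⟨⟨_, ?_, latticeExtend_half_smul hv⟩, ?_⟩
  · rw [mem_ball_zero_iff, norm_smul, Real.norm_of_nonneg (by norm_num)]
    linarith
  · rintro _ ⟨x, -, rfl⟩
    exact one_le_latticeExtend hg₁ x

lemma le_csSup_image_ball_latticeExtend {v : X} {g : ℤ → ℝ} {C r : ℝ} (hv : v ≠ 0)
    (hg₁ : ∀ k, 1 ≤ g k) (hgC : ∀ k, g k ≤ C) (hr : 0 < r) :
    g 0 ≤ sSup (latticeExtend v g '' ball 0 r) := by
  refine le_csSup ⟨C, ?_⟩ ⟨0, mem_ball_self hr, by rw [← zero_zsmul v, latticeExtend_zsmul hv]⟩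
  rintro _ ⟨x, -, rfl⟩
  exact latticeExtend_le ((hg₁ 0).trans (hgC 0)) hgC x

lemma lt_of_norm_zsmul_lt {w : X} {k K : ℤ} (h : ‖k • w‖ < K * ‖w‖) : k < K := by
  rw [norm_zsmul ℝ, Real.norm_eq_abs, ← Int.cast_abs] at h
  exact (le_abs_self k).trans_lt (by exact_mod_cast lt_of_mul_lt_mul_right h (norm_nonneg w))

variable [MeasurableSpace X] [BorelSpace X] [ProperSpace X] (μ : Measure X)
  [IsFiniteMeasureOnCompacts μ] [μ.IsOpenPosMeasure] [NullSingletonClass μ]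

lemma latticeExtend_cappedGeom_dpp {α ε M q : ℝ} {K : ℤ} {e x : X} (he : ‖e‖ = 1) (hε : 0 < ε)
    (hq : α * (q ^ 2 + 1) = 2 * q) (hq₀ : q ≠ 0) (hx : ‖x‖ < K * ε) :
    latticeExtend (ε • e) (cappedGeom M q K) x =
      α * ∫ z, latticeExtend (ε • e) (cappedGeom M q K) (x + ε • z) ∂symmDirac e +
        (1 - α) * ⨍ y in ball x ε, latticeExtend (ε • e) (cappedGeom M q K) y ∂μ := by
  have hv : ε • e ≠ 0 := smul_ne_zero hε.ne' (norm_ne_zero_iff.1 (by simp [he]))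
  have havg : ⨍ y in ball x ε, latticeExtend (ε • e) (cappedGeom M q K) y ∂μ = 1 := by
    rw [average_congr (ae_restrict_of_ae (latticeExtend_ae_eq_one μ _ _)), Pi.one_def,
      setAverage_const (measure_ball_pos μ x hε).ne' measure_ball_lt_top.ne]
  rw [integral_symmDirac, havg, mul_one, smul_neg, ← sub_eq_add_neg]
  refine latticeExtend_eq_of_recurrence hv fun k hk => cappedGeom_recurrence hq hq₀ ?_
  refine lt_of_norm_zsmul_lt (w := ε • e) ?_
  rwa [hk, norm_smul, he, Real.norm_of_nonneg hε.le, mul_one]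

end DPP

/-- **failure of the classical Harnack inequality.** Let `N ≥ 1`,
`α ∈ (0,1)`, `β = 1 − α`, `Λ = 1` and `ε ∈ (0,1)`. For every `M > 0` there exist a family `ν`
of symmetric probability measures supported in the closed unit ball (with
`x ↦ ∫ u(x+z) dν_x(z)` Borel measurable for every bounded Borel measurable `u`) and a bounded
Borel measurable `u : ℝ^N → ℝ` with `u ≥ 1` on `ℝ^N` satisfying the DPP
`u(x) = α ∫ u(x+εz) dν_x(z) + β ⨍_{B_ε(x)} u(y) dy` for every `x ∈ B_2`,
with `inf_{B_1} u = 1` and `sup_{B_1} u ≥ M`. -/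
theorem harnack_fails (N : ℕ) (hN : 1 ≤ N) (α β ε : ℝ)
    (hα : α ∈ Set.Ioo (0 : ℝ) 1) (hβ : β = 1 - α) (hε : ε ∈ Set.Ioo (0 : ℝ) 1)
    (M : ℝ) (hM : 0 < M) :
    ∃ (ν : EuclideanSpace ℝ (Fin N) → Measure (EuclideanSpace ℝ (Fin N)))
      (u : EuclideanSpace ℝ (Fin N) → ℝ),
      (∀ x, IsProbabilityMeasure (ν x)) ∧
      (∀ x, ν x (closedBall (0 : EuclideanSpace ℝ (Fin N)) 1)ᶜ = 0) ∧
      (∀ x, ∀ s : Set (EuclideanSpace ℝ (Fin N)), MeasurableSet s →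
        ν x s = ν x (Neg.neg ⁻¹' s)) ∧
      (∀ v : EuclideanSpace ℝ (Fin N) → ℝ, Measurable v → (∃ K, ∀ x, |v x| ≤ K) →
        Measurable fun x => ∫ z, v (x + z) ∂(ν x)) ∧
      Measurable u ∧ (∃ K, ∀ x, |u x| ≤ K) ∧
      (∀ x, 1 ≤ u x) ∧
      (∀ x ∈ ball (0 : EuclideanSpace ℝ (Fin N)) 2,
        u x = α * ∫ z, u (x + ε • z) ∂(ν x) + β * ⨍ y in ball x ε, u y) ∧
      sInf (u '' ball (0 : EuclideanSpace ℝ (Fin N)) 1) = 1 ∧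
      M ≤ sSup (u '' ball (0 : EuclideanSpace ℝ (Fin N)) 1) := by
  obtain ⟨hα₀, hα₁⟩ := hα
  obtain ⟨hε₀, hε₁⟩ := hε
  obtain ⟨q, hq₁, hq⟩ := exists_one_le_mul_sq_add_one_eq hα₀ hα₁.le
  have hq₀ : 0 < q := zero_lt_one.trans_le hq₁
  obtain ⟨K, hK⟩ := exists_nat_gt (2 / ε)
  set e : EuclideanSpace ℝ (Fin N) := EuclideanSpace.single ⟨0, hN⟩ 1
  have he : ‖e‖ = 1 := by simp [e]
  have hεe : ‖ε • e‖ = ε := by rw [norm_smul, he, Real.norm_of_nonneg hε₀.le, mul_one]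
  have hv : ε • e ≠ 0 := norm_ne_zero_iff.1 (by rw [hεe]; exact hε₀.ne')
  have : Nontrivial (EuclideanSpace ℝ (Fin N)) := nontrivial_of_ne _ 0 hv
  have hg₁ := one_le_cappedGeom hM.le hq₀ K
  have hgC := cappedGeom_le hM.le hq₁ K
  refine ⟨fun _ => symmDirac e, latticeExtend (ε • e) (cappedGeom M q K), fun _ => inferInstance,
    fun _ => symmDirac_apply_eq_zero (by simp [he]) (by simp [he]),
    fun _ s _ => (Measure.measure_preimage_neg _ s).symm,
    fun v _ _ => by simp only [integral_symmDirac]; fun_prop,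
    measurable_latticeExtend _ _, ⟨_, abs_latticeExtend_le hg₁ hgC⟩, one_le_latticeExtend hg₁,
    fun x hx => ?_, csInf_image_ball_latticeExtend hv hg₁ (by linarith), ?_⟩
  · rw [hβ]
    refine latticeExtend_cappedGeom_dpp volume he hε₀ hq hq₀.ne' ?_
    rw [mem_ball_zero_iff] at hx
    rw [div_lt_iff₀ hε₀] at hK
    push_cast
    linarith
  · calc M ≤ cappedGeom M q K 0 := by simp [cappedGeom]
      _ ≤ _ := le_csSup_image_ball_latticeExtend hv hg₁ hgC one_pos
end
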